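/- arXiv:2401.08437 — 4 statements merged into one kernel-verified Lean document; each statement's English description precedes it below -/
import Mathlib

section
/- For every λ ∈ ℤ^D \ {0} the function ζ_λ satisfies: (i) for all t > 0, min_{1≤i≤D} 1/(1−p_i) ≤ ζ_λ(t) ≤ max_{1≤i≤D} 1/(1−p_i); (ii) t ↦ ζ_λ(t) is nonincreasing on (0,∞); (iii) ∫_0^1 |ζ_λ′(s)| ds ≤ max_{1≤i≤D} 1/(1−p_i) − min_{1≤i≤D} 1/(1−p_i). -/
open Real Filter MeasureTheory Topology

/-- τ_λ(t) = (∑ᵢ t^(2-2pᵢ) λᵢ²)^(1/2). -/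
noncomputable def tau {D : ℕ} (p : Fin D → ℝ) (lam : Fin D → ℤ) (t : ℝ) : ℝ :=
  Real.sqrt (∑ i, t ^ (2 - 2 * p i) * ((lam i : ℝ)) ^ 2)

/-- ζ_λ(t) = 2τ_λ(t)² / ∑ᵢ (2-2pᵢ) t^(2-2pᵢ) λᵢ². -/
noncomputable def zeta {D : ℕ} (p : Fin D → ℝ) (lam : Fin D → ℤ) (t : ℝ) : ℝ :=
  2 * tau p lam t ^ 2 / ∑ i, (2 - 2 * p i) * t ^ (2 - 2 * p i) * ((lam i : ℝ)) ^ 2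

/-!
Write `aᵢ = 2 - 2pᵢ > 0`, `cᵢ = λᵢ²`, `N(t) = ∑ cᵢ tᵃⁱ`, `S(t) = ∑ aᵢ cᵢ tᵃⁱ`, `Q(t) = ∑ aᵢ² cᵢ tᵃⁱ`,
so that `ζ = 2N/S`, `t N' = S` and `t S' = Q`. Since `2N = ∑ (2/aᵢ) · aᵢ cᵢ tᵃⁱ`, the value `ζ(t)` is a
weighted mean of the numbers `2/aᵢ = 1/(1 - pᵢ)`, which gives the bounds. The derivative of `N/S` is
`(S² - NQ)/(t S²)`, which is nonpositive by Cauchy–Schwarz. Finally, for a monotone function the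
integral of `|f'|` is at most the increment of `f` (Lebesgue), and an antitone function with values in
`[m, M]` on `(0, 1]` has increment at most `M - m`.
-/

open Set

section WeightedMean

variable {ι : Type*} [Fintype ι] (x w : ι → ℝ)

theorem sInf_range_mul_sum_le_sum_mul (hw : ∀ i, 0 ≤ w i) :
    sInf (range x) * ∑ i, w i ≤ ∑ i, w i * x i := by
  rw [Finset.mul_sum]
  exact Finset.sum_le_sum fun i _ ↦ by
    rw [mul_comm]
    exact mul_le_mul_of_nonneg_left (ciInf_le (Finite.bddBelow_range x) i) (hw i)

theorem sum_mul_le_sSup_range_mul_sum (hw : ∀ i, 0 ≤ w i) :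
    ∑ i, w i * x i ≤ sSup (range x) * ∑ i, w i := by
  rw [Finset.mul_sum]
  exact Finset.sum_le_sum fun i _ ↦ by
    rw [mul_comm (sSup _)]
    exact mul_le_mul_of_nonneg_left (le_ciSup (Finite.bddAbove_range x) i) (hw i)

end WeightedMean

section PowerSum

variable {ι : Type*} [Fintype ι] (a c : ι → ℝ) {t : ℝ}

noncomputable def powerSum (t : ℝ) : ℝ :=
  ∑ i, t ^ a i * c i

theorem powerSum_nonneg (hc : 0 ≤ c) (ht : 0 ≤ t) : 0 ≤ powerSum a c t :=
  Finset.sum_nonneg fun i _ ↦ mul_nonneg (rpow_nonneg ht _) (hc i)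

theorem powerSum_pos (hc : 0 ≤ c) (hc₀ : c ≠ 0) (ht : 0 < t) : 0 < powerSum a c t := by
  obtain ⟨j, hj⟩ := Function.ne_iff.1 hc₀
  exact Finset.sum_pos' (fun i _ ↦ mul_nonneg (rpow_nonneg ht.le _) (hc i))
    ⟨j, Finset.mem_univ j, mul_pos (rpow_pos_of_pos ht _) ((hc j).lt_of_ne' hj)⟩

theorem powerSum_mul_pos (ha : ∀ i, 0 < a i) (hc : 0 ≤ c) (hc₀ : c ≠ 0) (ht : 0 < t) :
    0 < powerSum a (a * c) t :=
  powerSum_pos _ _ (fun i ↦ mul_nonneg (ha i).le (hc i))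
    (fun h ↦ hc₀ <| funext fun i ↦ (mul_eq_zero.1 (congrFun h i)).resolve_left (ha i).ne') ht

theorem hasDerivAt_powerSum (ht : 0 < t) :
    HasDerivAt (powerSum a c) (powerSum a (a * c) t / t) t := by
  simp only [powerSum, Finset.sum_div]
  refine HasDerivAt.fun_sum fun i _ ↦ ?_
  refine ((hasDerivAt_rpow_const (p := a i) (Or.inl ht.ne')).mul_const (c i)).congr_deriv ?_
  rw [rpow_sub_one ht.ne', Pi.mul_apply]
  ring

/-- Cauchy–Schwarz for the vectors `(√(cᵢ tᵃⁱ))ᵢ` and `(aᵢ √(cᵢ tᵃⁱ))ᵢ`. -/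
theorem powerSum_mul_sq_le (hc : 0 ≤ c) (ht : 0 ≤ t) :
    powerSum a (a * c) t ^ 2 ≤ powerSum a c t * powerSum a (a * (a * c)) t :=
  Finset.sum_sq_le_sum_mul_sum_of_sq_le_mul _
    (fun i _ ↦ mul_nonneg (rpow_nonneg ht _) (hc i))
    (fun i _ ↦ mul_nonneg (rpow_nonneg ht _) (by
      simpa only [Pi.mul_apply, ← mul_assoc] using mul_nonneg (mul_self_nonneg (a i)) (hc i)))
    (fun i _ ↦ le_of_eq (by simp only [Pi.mul_apply]; ring))

theorem antitoneOn_powerSum_div (ha : ∀ i, 0 < a i) (hc : 0 ≤ c) (hc₀ : c ≠ 0) :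
    AntitoneOn (fun t ↦ powerSum a c t / powerSum a (a * c) t) (Ioi 0) := by
  set N := powerSum a c
  set S := powerSum a (a * c)
  set Q := powerSum a (a * (a * c))
  have hderiv : ∀ t ∈ Ioi (0 : ℝ),
      HasDerivAt (fun t ↦ N t / S t) ((S t ^ 2 - N t * Q t) / t / S t ^ 2) t := fun t ht ↦
    ((hasDerivAt_powerSum a c ht).div (hasDerivAt_powerSum a (a * c) ht)
      (powerSum_mul_pos a c ha hc hc₀ ht).ne').congr_deriv (by ring)
  refine antitoneOn_of_hasDerivWithinAt_nonpos (convex_Ioi 0)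
    (fun t ht ↦ (hderiv t ht).continuousAt.continuousWithinAt)
    (fun t ht ↦ (hderiv t (interior_subset ht)).hasDerivWithinAt) fun t ht ↦ ?_
  rw [interior_Ioi] at ht
  have hCS : S t ^ 2 ≤ N t * Q t := powerSum_mul_sq_le a c hc (le_of_lt ht)
  exact div_nonpos_of_nonpos_of_nonneg
    (div_nonpos_of_nonpos_of_nonneg (sub_nonpos.2 hCS) (le_of_lt ht)) (sq_nonneg _)

end PowerSum

theorem MonotoneOn.integral_abs_deriv_le {g : ℝ → ℝ} {a b : ℝ} (hab : a ≤ b)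
    (hg : MonotoneOn g (Icc a b)) :
    IntegrableOn (fun x ↦ |deriv g x|) (Ioc a b) ∧
      ∫ x in Ioc a b, |deriv g x| ≤ g b - g a := by
  have hgab : g a ≤ g b := hg (left_mem_Icc.2 hab) (right_mem_Icc.2 hab) hab
  rw [← uIcc_of_le hab] at hg
  have hint := (intervalIntegrable_iff_integrableOn_Ioc_of_le hab).1 hg.intervalIntegrable_deriv
  have hbound := hg.intervalIntegral_deriv_mem_uIcc.2
  have hnonneg : ∀ x ∈ Ioo a b, 0 ≤ deriv g x := fun x hx ↦ by
    rw [← derivWithin_of_mem_nhds (Icc_mem_nhds hx.1 hx.2), ← uIcc_of_le hab]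
    exact hg.derivWithin_nonneg
  refine ⟨hint.abs, ?_⟩
  calc ∫ x in Ioc a b, |deriv g x|
      = ∫ x in Ioo a b, deriv g x := by
        rw [integral_Ioc_eq_integral_Ioo]
        exact setIntegral_congr_fun measurableSet_Ioo fun x hx ↦ abs_of_nonneg (hnonneg x hx)
    _ = ∫ x in a..b, deriv g x := by
        rw [intervalIntegral.integral_of_le hab, integral_Ioc_eq_integral_Ioo]
    _ ≤ g b - g a := hbound.trans (max_le (sub_nonneg.2 hgab) le_rfl)

theorem AntitoneOn.integral_abs_deriv_le {f : ℝ → ℝ} {a b M : ℝ} (hab : a < b)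
    (hf : AntitoneOn f (Ioc a b)) (hM : ∀ x ∈ Ioc a b, f x ≤ M) :
    IntegrableOn (fun x ↦ |deriv f x|) (Ioc a b) ∧
      ∫ x in Ioc a b, |deriv f x| ≤ M - f b := by
  -- `-f`, extended by `-M` at `a`, is monotone on the closed interval `[a, b]`
  set g : ℝ → ℝ := fun x ↦ if a < x then -f x else -M
  have hg : MonotoneOn g (Icc a b) := by
    intro x hx y hy hxy
    rcases hx.1.eq_or_lt with rfl | hax
    · simp only [g, lt_irrefl, if_false]
      split_ifs with hay
      · exact neg_le_neg (hM y ⟨hay, hy.2⟩)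
      · exact le_rfl
    · simp only [g, hax, hax.trans_le hxy, if_true]
      exact neg_le_neg (hf ⟨hax, hx.2⟩ ⟨hax.trans_le hxy, hy.2⟩ hxy)
  have hderiv : EqOn (fun x ↦ |deriv g x|) (fun x ↦ |deriv f x|) (Ioc a b) := fun x hx ↦ by
    have hgf : g =ᶠ[𝓝 x] fun y ↦ -f y :=
      (eventually_gt_nhds hx.1).mono fun y hy ↦ if_pos hy
    simp only [hgf.deriv_eq, deriv.fun_neg, abs_neg]
  obtain ⟨hint, hle⟩ := hg.integral_abs_deriv_le hab.le
  refine ⟨hint.congr_fun hderiv measurableSet_Ioc, ?_⟩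
  have hgba : g b - g a = M - f b := by simp only [g, hab, lt_irrefl, if_true, if_false]; ring
  rw [← setIntegral_congr_fun measurableSet_Ioc hderiv, ← hgba]
  exact hle

section Kasner

variable {D : ℕ} (p : Fin D → ℝ) (lam : Fin D → ℤ)

theorem zeta_eq_two_mul_powerSum_div {t : ℝ} (ht : 0 ≤ t) :
    zeta p lam t =
      2 * (powerSum (fun i ↦ 2 - 2 * p i) (fun i ↦ (lam i : ℝ) ^ 2) t /
        powerSum (fun i ↦ 2 - 2 * p i) ((fun i ↦ 2 - 2 * p i) * fun i ↦ (lam i : ℝ) ^ 2) t) := by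
  have hN : 0 ≤ ∑ i, t ^ (2 - 2 * p i) * (lam i : ℝ) ^ 2 :=
    powerSum_nonneg _ _ (fun i ↦ sq_nonneg _) ht
  rw [zeta, tau, sq_sqrt hN, mul_div_assoc]
  congr 2
  exact Finset.sum_congr rfl fun i _ ↦ by simp only [Pi.mul_apply]; ring

variable {p lam}

theorem intCast_sq_ne_zero (hlam : lam ≠ 0) : (fun i ↦ (lam i : ℝ) ^ 2) ≠ 0 :=
  fun h ↦ hlam <| funext fun i ↦ by simpa using congrFun h i

theorem zeta_mem_Icc (hp : ∀ i, p i < 1) (hlam : lam ≠ 0) {t : ℝ} (ht : 0 < t) :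
    sInf (range fun i ↦ 1 / (1 - p i)) ≤ zeta p lam t ∧
      zeta p lam t ≤ sSup (range fun i ↦ 1 / (1 - p i)) := by
  have ha : ∀ i, 0 < 2 - 2 * p i := fun i ↦ by linarith [hp i]
  have hS := powerSum_mul_pos _ _ ha (fun i ↦ sq_nonneg _) (intCast_sq_ne_zero hlam) ht
  set w : Fin D → ℝ := fun i ↦ t ^ (2 - 2 * p i) * ((2 - 2 * p i) * (lam i : ℝ) ^ 2)
  have hw : ∀ i, 0 ≤ w i := fun i ↦
    mul_nonneg (rpow_nonneg ht.le _) (mul_nonneg (ha i).le (sq_nonneg _))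
  have hmean : 2 * powerSum (fun i ↦ 2 - 2 * p i) (fun i ↦ (lam i : ℝ) ^ 2) t =
      ∑ i, w i * (1 / (1 - p i)) := by
    rw [powerSum, Finset.mul_sum]
    exact Finset.sum_congr rfl fun i _ ↦ by
      have : 1 - p i ≠ 0 := by linarith [hp i]
      simp only [w]
      field_simp
  rw [zeta_eq_two_mul_powerSum_div p lam ht.le, ← mul_div_assoc, le_div_iff₀ hS,
    div_le_iff₀ hS, hmean]
  exact ⟨sInf_range_mul_sum_le_sum_mul _ w hw, sum_mul_le_sSup_range_mul_sum _ w hw⟩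

theorem antitoneOn_zeta (hp : ∀ i, p i < 1) (hlam : lam ≠ 0) :
    AntitoneOn (zeta p lam) (Ioi 0) := by
  have h := antitoneOn_powerSum_div (fun i ↦ 2 - 2 * p i) (fun i ↦ (lam i : ℝ) ^ 2)
    (fun i ↦ by linarith [hp i]) (fun i ↦ sq_nonneg _) (intCast_sq_ne_zero hlam)
  exact AntitoneOn.congr (fun x hx y hy hxy ↦ mul_le_mul_of_nonneg_left (h hx hy hxy) zero_le_two)
    fun t ht ↦ (zeta_eq_two_mul_powerSum_div p lam (le_of_lt ht)).symm

end Kasner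

theorem zeta_bounds_monotone_bv_general (D : ℕ) (p : Fin D → ℝ) (hp : ∀ i, p i < 1)
    (lam : Fin D → ℤ) (hlam : lam ≠ 0) :
    (∀ t : ℝ, 0 < t →
      sInf (Set.range fun i => 1 / (1 - p i)) ≤ zeta p lam t ∧
        zeta p lam t ≤ sSup (Set.range fun i => 1 / (1 - p i))) ∧
    AntitoneOn (zeta p lam) (Set.Ioi 0) ∧
    MeasureTheory.IntegrableOn (fun s => |deriv (zeta p lam) s|) (Set.Ioc 0 1) ∧
    (∫ s in Set.Ioc (0:ℝ) 1, |deriv (zeta p lam) s|) ≤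
      sSup (Set.range fun i => 1 / (1 - p i)) - sInf (Set.range fun i => 1 / (1 - p i)) := by
  have hbounds := fun t (ht : 0 < t) ↦ zeta_mem_Icc hp hlam ht
  have hanti := antitoneOn_zeta hp hlam
  obtain ⟨hint, hle⟩ := (hanti.mono Ioc_subset_Ioi_self).integral_abs_deriv_le zero_lt_one
    fun t ht ↦ (hbounds t ht.1).2
  exact ⟨hbounds, hanti, hint, hle.trans (by linarith [(hbounds 1 one_pos).1])⟩

/-- Lemma 3.1 (Lemma `lem:tau`): bounds, monotonicity and BV estimate for ζ_λ. -/
theorem zeta_bounds_monotone_bv (D : ℕ) (hD : 2 ≤ D) (p : Fin D → ℝ) (hp : ∀ i, p i < 1)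
    (lam : Fin D → ℤ) (hlam : lam ≠ 0) :
    (∀ t : ℝ, 0 < t →
      sInf (Set.range fun i => 1 / (1 - p i)) ≤ zeta p lam t ∧
        zeta p lam t ≤ sSup (Set.range fun i => 1 / (1 - p i))) ∧
    AntitoneOn (zeta p lam) (Set.Ioi 0) ∧
    MeasureTheory.IntegrableOn (fun s => |deriv (zeta p lam) s|) (Set.Ioc 0 1) ∧
    (∫ s in Set.Ioc (0:ℝ) 1, |deriv (zeta p lam) s|) ≤
      sSup (Set.range fun i => 1 / (1 - p i)) - sInf (Set.range fun i => 1 / (1 - p i)) :=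
  zeta_bounds_monotone_bv_general D p hp lam hlam
end

section
/- (i) There is a constant C > 0 depending only on D and p_1,…,p_D such that for every α > 0 and every λ ∈ ℤ^D \ {0}: ∫_{t_{λ*}}^1 τ_λ(s)^{−α} ds/s ≤ C/α. (ii) There is a constant C > 0 depending only on D and p_1,…,p_D such that for every λ ∈ ℤ^D \ {0} and every t ∈ (0, t_{λ*}]: ∫_0^t τ_λ(s)²·(1 + log(t_{λ*}/s)²) ds/s ≤ C·τ_λ(t)²·(1 + log(t_{λ*}/t)²) ≤ C². -/
open Real Filter MeasureTheory Topology

section helpers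

variable {D : ℕ} {p : Fin D → ℝ} {lam : Fin D → ℤ}

lemma S_nonneg {s : ℝ} (hs : 0 ≤ s) :
    0 ≤ ∑ i, s ^ (2 - 2 * p i) * ((lam i : ℝ)) ^ 2 :=
  Finset.sum_nonneg fun i _ => mul_nonneg (Real.rpow_nonneg hs _) (sq_nonneg _)

lemma tau_sq {s : ℝ} (hs : 0 ≤ s) :
    tau p lam s ^ 2 = ∑ i, s ^ (2 - 2 * p i) * ((lam i : ℝ)) ^ 2 :=
  Real.sq_sqrt (S_nonneg hs)

lemma tau_nonneg (s : ℝ) : 0 ≤ tau p lam s := Real.sqrt_nonneg _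

lemma S_pos (hlam : lam ≠ 0) {s : ℝ} (hs : 0 < s) :
    0 < ∑ i, s ^ (2 - 2 * p i) * ((lam i : ℝ)) ^ 2 := by
  obtain ⟨j, hj⟩ := Function.ne_iff.mp hlam
  refine Finset.sum_pos' (fun i _ => mul_nonneg (Real.rpow_nonneg hs.le _) (sq_nonneg _))
    ⟨j, Finset.mem_univ j, ?_⟩
  have hj' : ((lam j : ℝ)) ≠ 0 := Int.cast_ne_zero.mpr hj
  have : ((lam j : ℝ)) ^ 2 > 0 := by positivity
  exact mul_pos (Real.rpow_pos_of_pos hs _) this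

lemma tau_pos (hlam : lam ≠ 0) {s : ℝ} (hs : 0 < s) : 0 < tau p lam s :=
  Real.sqrt_pos.mpr (S_pos hlam hs)

/-- Core comparison: for `0 < u ≤ v`, `τ(u)² ≤ (u/v)^ε τ(v)²`. -/
lemma tau_sq_compare {ε : ℝ} (hεle : ∀ i, ε ≤ 2 - 2 * p i)
    {u v : ℝ} (hu : 0 < u) (huv : u ≤ v) :
    tau p lam u ^ 2 ≤ (u / v) ^ ε * tau p lam v ^ 2 := by
  have hv : 0 < v := hu.trans_le huv
  rw [tau_sq hu.le, tau_sq hv.le, Finset.mul_sum]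
  refine Finset.sum_le_sum fun i _ => ?_
  have hdiv : 0 < u / v := div_pos hu hv
  have hdiv1 : u / v ≤ 1 := (div_le_one hv).mpr huv
  have h1 : u ^ (2 - 2 * p i) = (u / v) ^ (2 - 2 * p i) * v ^ (2 - 2 * p i) := by
    rw [← Real.mul_rpow hdiv.le hv.le, div_mul_cancel₀ _ hv.ne']
  have h2 : (u / v) ^ (2 - 2 * p i) ≤ (u / v) ^ ε :=
    Real.rpow_le_rpow_of_exponent_ge hdiv hdiv1 (hεle i)
  calc u ^ (2 - 2 * p i) * ((lam i : ℝ)) ^ 2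
      = (u / v) ^ (2 - 2 * p i) * (v ^ (2 - 2 * p i) * ((lam i : ℝ)) ^ 2) := by rw [h1]; ring
    _ ≤ (u / v) ^ ε * (v ^ (2 - 2 * p i) * ((lam i : ℝ)) ^ 2) := by
        have : 0 ≤ v ^ (2 - 2 * p i) * ((lam i : ℝ)) ^ 2 :=
          mul_nonneg (Real.rpow_nonneg hv.le _) (sq_nonneg _)
        exact mul_le_mul_of_nonneg_right h2 this

lemma log_le_rpow_aux {ε x : ℝ} (hε : 0 < ε) (hx : 1 ≤ x) :
    Real.log x ≤ (4 / ε) * x ^ (ε / 4) := by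
  have hx0 : (0:ℝ) < x := lt_of_lt_of_le one_pos hx
  have h1 : Real.log (x ^ (ε / 4)) = (ε / 4) * Real.log x := Real.log_rpow hx0 _
  have h2 : Real.log (x ^ (ε / 4)) ≤ x ^ (ε / 4) - 1 :=
    Real.log_le_sub_one_of_pos (Real.rpow_pos_of_pos hx0 _)
  have h3 : (ε / 4) * Real.log x ≤ x ^ (ε / 4) := by
    rw [← h1]; linarith
  have key : (4 / ε) * ((ε / 4) * Real.log x) = Real.log x := by
    field_simp
  calc Real.log x = (4 / ε) * ((ε / 4) * Real.log x) := key.symm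
    _ ≤ (4 / ε) * x ^ (ε / 4) := by
        apply mul_le_mul_of_nonneg_left h3; positivity

lemma log_sq_le {ε x : ℝ} (hε : 0 < ε) (hx : 1 ≤ x) :
    Real.log x ^ 2 ≤ (16 / ε ^ 2) * x ^ (ε / 2) := by
  have hx0 : (0:ℝ) < x := lt_of_lt_of_le one_pos hx
  have h0 : 0 ≤ Real.log x := Real.log_nonneg hx
  have h1 := log_le_rpow_aux hε hx
  have h2 : Real.log x ^ 2 ≤ ((4 / ε) * x ^ (ε / 4)) ^ 2 := pow_le_pow_left₀ h0 h1 2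
  have h3 : ((4 / ε) * x ^ (ε / 4)) ^ 2 = (16 / ε ^ 2) * (x ^ (ε / 4)) ^ 2 := by ring
  have h4 : (x ^ (ε / 4) : ℝ) ^ (2:ℕ) = x ^ (ε / 2) := by
    rw [← Real.rpow_natCast (x ^ (ε / 4)) 2, ← Real.rpow_mul hx0.le]
    congr 1; push_cast; ring
  rw [h3, h4] at h2
  exact h2

/-- continuity of the sum on positive reals. -/
lemma S_contOn : ContinuousOn (fun s : ℝ => ∑ i, s ^ (2 - 2 * p i) * ((lam i : ℝ)) ^ 2)
    (Set.Ioi (0:ℝ)) := by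
  refine continuousOn_finset_sum _ fun i _ => ?_
  exact (continuousOn_id.rpow_const fun x hx => Or.inl (ne_of_gt hx)).mul continuousOn_const

end helpers

lemma tau_low {D : ℕ} {p : Fin D → ℝ} {lam : Fin D → ℤ} {ε : ℝ}
    (hεle : ∀ i, ε ≤ 2 - 2 * p i)
    {tstar : ℝ} (ht0 : 0 < tstar) (htau : tau p lam tstar = 1)
    {s : ℝ} (hs : tstar ≤ s) :
    (s / tstar) ^ ε ≤ tau p lam s ^ 2 := by
  have h := tau_sq_compare (lam := lam) hεle ht0 hs
  rw [htau, one_pow] at h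
  have hst : 0 < s / tstar := div_pos (lt_of_lt_of_le ht0 hs) ht0
  have hs0 : 0 < s := lt_of_lt_of_le ht0 hs
  have hx : (s / tstar) ^ ε * (tstar / s) ^ ε = 1 := by
    rw [← Real.mul_rpow hst.le (by positivity)]
    have : (s / tstar) * (tstar / s) = 1 := by field_simp
    rw [this, Real.one_rpow]
  calc (s / tstar) ^ ε = (s / tstar) ^ ε * 1 := (mul_one _).symm
    _ ≤ (s / tstar) ^ ε * ((tstar / s) ^ ε * tau p lam s ^ 2) :=
        mul_le_mul_of_nonneg_left h (Real.rpow_nonneg hst.le _)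
    _ = ((s / tstar) ^ ε * (tstar / s) ^ ε) * tau p lam s ^ 2 := by ring
    _ = tau p lam s ^ 2 := by rw [hx, one_mul]

lemma part_one {D : ℕ} {p : Fin D → ℝ} {ε : ℝ} (hε : 0 < ε) (hεle : ∀ i, ε ≤ 2 - 2 * p i)
    (lam : Fin D → ℤ) (hlam : lam ≠ 0) (tstar : ℝ) (ht0 : 0 < tstar) (ht1 : tstar ≤ 1)
    (htau : tau p lam tstar = 1) (α : ℝ) (hα : 0 < α) :
    (∫ s in tstar..1, tau p lam s ^ (-α) / s) ≤ (2 / ε) / α := by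
  set β := α * ε / 2 with hβdef
  have hβ0 : 0 < β := by positivity
  have hsub : Set.uIcc tstar 1 ⊆ Set.Ioi (0:ℝ) := by
    rw [Set.uIcc_of_le ht1]
    intro x hx
    exact lt_of_lt_of_le ht0 hx.1
  -- pointwise bound
  have key : ∀ s ∈ Set.Icc tstar 1, tau p lam s ^ (-α) / s ≤ tstar ^ β * s ^ (-β - 1) := by
    intro s hs
    have hs0 : 0 < s := lt_of_lt_of_le ht0 hs.1
    have hst : 0 < s / tstar := div_pos hs0 ht0
    have hlow2 : (s / tstar) ^ ε ≤ tau p lam s ^ 2 := tau_low hεle ht0 htau hs.1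
    have hlow : (s / tstar) ^ (ε / 2) ≤ tau p lam s := by
      have h1 := Real.sqrt_le_sqrt hlow2
      rw [Real.sqrt_sq (tau_nonneg s)] at h1
      have h2 : Real.sqrt ((s / tstar) ^ ε) = (s / tstar) ^ (ε / 2) := by
        rw [Real.sqrt_eq_rpow, ← Real.rpow_mul hst.le]
        congr 1; ring
      rwa [h2] at h1
    have h3 : tau p lam s ^ (-α) ≤ ((s / tstar) ^ (ε / 2)) ^ (-α) :=
      Real.rpow_le_rpow_of_nonpos (Real.rpow_pos_of_pos hst _) hlow (neg_nonpos.mpr hα.le)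
    have h4 : ((s / tstar) ^ (ε / 2)) ^ (-α) = (s / tstar) ^ (-β) := by
      rw [← Real.rpow_mul hst.le]
      congr 1; rw [hβdef]; ring
    have h5 : (s / tstar) ^ (-β) = s ^ (-β) * tstar ^ β := by
      rw [Real.div_rpow hs0.le ht0.le, Real.rpow_neg ht0.le, div_eq_mul_inv, inv_inv]
    rw [div_le_iff₀ hs0]
    have h6 : tstar ^ β * s ^ (-β - 1) * s = s ^ (-β) * tstar ^ β := by
      have : s ^ (-β - 1) * s = s ^ (-β) := by
        rw [← Real.rpow_add_one hs0.ne' (-β - 1)]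
        congr 1; ring
      calc tstar ^ β * s ^ (-β - 1) * s = tstar ^ β * (s ^ (-β - 1) * s) := by ring
        _ = s ^ (-β) * tstar ^ β := by rw [this]; ring
    rw [h6]
    calc tau p lam s ^ (-α) ≤ ((s / tstar) ^ (ε / 2)) ^ (-α) := h3
      _ = s ^ (-β) * tstar ^ β := by rw [h4, h5]
  -- integrability
  have htaucont : ContinuousOn (fun s => tau p lam s) (Set.uIcc tstar 1) :=
    Real.continuous_sqrt.comp_continuousOn (S_contOn.mono hsub)
  have hint1 : IntervalIntegrable (fun s => tau p lam s ^ (-α) / s) volume tstar 1 := by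
    apply ContinuousOn.intervalIntegrable
    exact (htaucont.rpow_const fun x hx => Or.inl (tau_pos hlam (hsub hx)).ne').div
      continuousOn_id fun x hx => (hsub hx).ne'
  have h0mem : (0:ℝ) ∉ Set.uIcc tstar 1 := fun h => lt_irrefl 0 (Set.mem_Ioi.mp (hsub h))
  have hint2 : IntervalIntegrable (fun s => tstar ^ β * s ^ (-β - 1)) volume tstar 1 :=
    (intervalIntegral.intervalIntegrable_rpow (Or.inr h0mem)).const_mul _
  have hval : (∫ s in tstar..1, s ^ (-β - 1)) = ((1:ℝ) ^ (-β - 1 + 1) - tstar ^ (-β - 1 + 1)) / (-β - 1 + 1) :=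
    integral_rpow (Or.inr ⟨by intro h; rw [sub_eq_neg_add] at h; nlinarith, h0mem⟩)
  rw [show -β - 1 + 1 = -β by ring, Real.one_rpow] at hval
  have hts : tstar ^ β * tstar ^ (-β) = 1 := by
    rw [← Real.rpow_add ht0]; simp
  have hA : 0 ≤ tstar ^ β := Real.rpow_nonneg ht0.le _
  calc (∫ s in tstar..1, tau p lam s ^ (-α) / s)
      ≤ ∫ s in tstar..1, tstar ^ β * s ^ (-β - 1) :=
        intervalIntegral.integral_mono_on ht1 hint1 hint2 key
    _ = tstar ^ β * ((1 - tstar ^ (-β)) / (-β)) := by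
        rw [intervalIntegral.integral_const_mul, hval]
    _ = (tstar ^ β - tstar ^ β * tstar ^ (-β)) / (-β) := by ring
    _ = (1 - tstar ^ β) / β := by rw [hts]; ring
    _ ≤ 1 / β := by gcongr; linarith
    _ = (2 / ε) / α := by rw [hβdef]; field_simp

lemma rpow_div_self {s t δ : ℝ} (hs : 0 < s) (ht : 0 < t) :
    (s / t) ^ δ / s = t ^ (-δ) * s ^ (δ - 1) := by
  rw [Real.div_rpow hs.le ht.le, Real.rpow_neg ht.le, Real.rpow_sub hs, Real.rpow_one]
  ring

set_option maxHeartbeats 1000000 in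
lemma part_two {D : ℕ} {p : Fin D → ℝ} {ε : ℝ} (hε : 0 < ε) (hεle : ∀ i, ε ≤ 2 - 2 * p i)
    (lam : Fin D → ℤ) (hlam : lam ≠ 0) (tstar : ℝ) (ht0 : 0 < tstar) (ht1 : tstar ≤ 1)
    (htau : tau p lam tstar = 1) (t : ℝ) (ht : t ∈ Set.Ioc (0:ℝ) tstar) :
    (∫ s in Set.Ioc (0:ℝ) t, tau p lam s ^ 2 * (1 + Real.log (tstar / s) ^ 2) / s) ≤
      (2 / ε + 64 / ε ^ 3) * (tau p lam t ^ 2 * (1 + Real.log (tstar / t) ^ 2)) ∧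
    tau p lam t ^ 2 * (1 + Real.log (tstar / t) ^ 2) ≤ 1 + 16 / ε ^ 2 := by
  obtain ⟨ht0', htle⟩ := ht
  set L := Real.log (tstar / t) with hLdef
  have hL0 : 0 ≤ L := Real.log_nonneg ((one_le_div ht0').mpr htle)
  set T := tau p lam t ^ 2 with hTdef
  have hT0 : 0 ≤ T := sq_nonneg _
  set A := T * (1 + 2 * L ^ 2) * t ^ (-ε) with hAdef
  set B := T * (32 / ε ^ 2) * t ^ (-(ε / 2)) with hBdef
  have hA0 : 0 ≤ A := by
    apply mul_nonneg (mul_nonneg hT0 (by positivity)) (Real.rpow_nonneg ht0'.le _)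
  have hB0 : 0 ≤ B := by
    apply mul_nonneg (mul_nonneg hT0 (by positivity)) (Real.rpow_nonneg ht0'.le _)
  set g : ℝ → ℝ := fun s => A * s ^ (ε - 1) + B * s ^ (ε / 2 - 1) with hgdef
  -- pointwise bound
  have key : ∀ s ∈ Set.Ioc (0:ℝ) t, tau p lam s ^ 2 * (1 + Real.log (tstar / s) ^ 2) / s ≤ g s := by
    intro s hs
    obtain ⟨hs0, hst⟩ := hs
    have hstpos : 0 < s / t := div_pos hs0 ht0'
    have h1 : tau p lam s ^ 2 ≤ (s / t) ^ ε * T := tau_sq_compare hεle hs0 hst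
    have h2 : Real.log (tstar / s) = L + Real.log (t / s) := by
      rw [hLdef, Real.log_div ht0.ne' hs0.ne', Real.log_div ht0.ne' ht0'.ne',
        Real.log_div ht0'.ne' hs0.ne']
      ring
    have h3 : Real.log (tstar / s) ^ 2 ≤ 2 * L ^ 2 + 2 * Real.log (t / s) ^ 2 := by
      rw [h2]; nlinarith [sq_nonneg (L - Real.log (t / s))]
    have h4 : Real.log (t / s) ^ 2 ≤ (16 / ε ^ 2) * (t / s) ^ (ε / 2) :=
      log_sq_le hε ((one_le_div hs0).mpr hst)
    have h5 : 1 + Real.log (tstar / s) ^ 2 ≤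
        1 + 2 * L ^ 2 + 2 * ((16 / ε ^ 2) * (t / s) ^ (ε / 2)) := by
      linarith
    have e1 : (s / t) ^ ε / s = t ^ (-ε) * s ^ (ε - 1) := rpow_div_self hs0 ht0'
    have e2 : (s / t) ^ ε * (t / s) ^ (ε / 2) = (s / t) ^ (ε / 2) := by
      rw [show t / s = (s / t)⁻¹ by rw [inv_div], Real.inv_rpow hstpos.le,
        ← Real.rpow_neg hstpos.le, ← Real.rpow_add hstpos]
      congr 1; ring
    have e3 : (s / t) ^ (ε / 2) / s = t ^ (-(ε / 2)) * s ^ (ε / 2 - 1) := rpow_div_self hs0 ht0'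
    have hnum : tau p lam s ^ 2 * (1 + Real.log (tstar / s) ^ 2) ≤
        ((s / t) ^ ε * T) * (1 + 2 * L ^ 2 + 2 * ((16 / ε ^ 2) * (t / s) ^ (ε / 2))) :=
      mul_le_mul h1 h5 (by positivity) (by positivity)
    have step : tau p lam s ^ 2 * (1 + Real.log (tstar / s) ^ 2) / s ≤
        ((s / t) ^ ε * T) * (1 + 2 * L ^ 2 + 2 * ((16 / ε ^ 2) * (t / s) ^ (ε / 2))) / s := by
      gcongr
    refine step.trans_eq ?_
    show _ = A * s ^ (ε - 1) + B * s ^ (ε / 2 - 1)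
    have expand : ((s / t) ^ ε * T) * (1 + 2 * L ^ 2 + 2 * ((16 / ε ^ 2) * (t / s) ^ (ε / 2))) / s
        = T * (1 + 2 * L ^ 2) * ((s / t) ^ ε / s)
          + T * (32 / ε ^ 2) * ((s / t) ^ ε * (t / s) ^ (ε / 2) / s) := by
      field_simp
      ring
    rw [expand, e1, e2, e3, hAdef, hBdef]
    ring
  -- continuity / integrability
  have hsub2 : Set.Ioc (0:ℝ) t ⊆ Set.Ioi 0 := fun x hx => hx.1
  have hcontf : ContinuousOn
      (fun s => tau p lam s ^ 2 * (1 + Real.log (tstar / s) ^ 2) / s) (Set.Ioc (0:ℝ) t) := by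
    have htaucont : ContinuousOn (fun s => tau p lam s) (Set.Ioc (0:ℝ) t) :=
      Real.continuous_sqrt.comp_continuousOn (S_contOn.mono hsub2)
    have hlogcont : ContinuousOn (fun s => Real.log (tstar / s)) (Set.Ioc (0:ℝ) t) := by
      apply ContinuousOn.log
      · exact continuousOn_const.div continuousOn_id fun x hx => (hsub2 hx).ne'
      · exact fun x hx => div_ne_zero ht0.ne' (hsub2 hx).ne'
    exact ((htaucont.pow 2).mul (continuousOn_const.add (hlogcont.pow 2))).div
      continuousOn_id fun x hx => (hsub2 hx).ne'
  have hg_ii : IntervalIntegrable g volume 0 t :=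
    ((intervalIntegral.intervalIntegrable_rpow' (by linarith)).const_mul A).add
      ((intervalIntegral.intervalIntegrable_rpow' (by linarith)).const_mul B)
  have hg_int : IntegrableOn g (Set.Ioc (0:ℝ) t) := hg_ii.1
  have hf_int : IntegrableOn
      (fun s => tau p lam s ^ 2 * (1 + Real.log (tstar / s) ^ 2) / s) (Set.Ioc (0:ℝ) t) := by
    apply Integrable.mono' hg_int (hcontf.aestronglyMeasurable measurableSet_Ioc)
    filter_upwards [ae_restrict_mem measurableSet_Ioc] with s hs
    rw [Real.norm_eq_abs, abs_of_nonneg]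
    · exact key s hs
    · apply div_nonneg (mul_nonneg (sq_nonneg _) (by positivity)) hs.1.le
  -- value of ∫ g
  have hv1 : (∫ s in (0:ℝ)..t, s ^ (ε - 1)) = t ^ ε / ε := by
    rw [integral_rpow (Or.inl (by linarith))]
    rw [show ε - 1 + 1 = ε by ring, Real.zero_rpow hε.ne']
    ring
  have hv2 : (∫ s in (0:ℝ)..t, s ^ (ε / 2 - 1)) = t ^ (ε / 2) / (ε / 2) := by
    rw [integral_rpow (Or.inl (by linarith))]
    rw [show ε / 2 - 1 + 1 = ε / 2 by ring, Real.zero_rpow (by positivity)]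
    ring
  have hneg : t ^ (-ε) * t ^ ε = 1 := by
    rw [← Real.rpow_add ht0']; simp
  have hneg2 : t ^ (-(ε / 2)) * t ^ (ε / 2) = 1 := by
    rw [← Real.rpow_add ht0']; simp
  have hgval : (∫ s in Set.Ioc (0:ℝ) t, g s) = T * (1 + 2 * L ^ 2) / ε + T * (64 / ε ^ 3) := by
    rw [← intervalIntegral.integral_of_le ht0'.le]
    rw [hgdef]
    rw [intervalIntegral.integral_add
      ((intervalIntegral.intervalIntegrable_rpow' (by linarith)).const_mul A)
      ((intervalIntegral.intervalIntegrable_rpow' (by linarith)).const_mul B),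
      intervalIntegral.integral_const_mul, intervalIntegral.integral_const_mul, hv1, hv2]
    rw [hAdef, hBdef]
    have c1 : T * (1 + 2 * L ^ 2) * t ^ (-ε) * (t ^ ε / ε) =
        T * (1 + 2 * L ^ 2) * (t ^ (-ε) * t ^ ε) / ε := by ring
    have c2 : T * (32 / ε ^ 2) * t ^ (-(ε / 2)) * (t ^ (ε / 2) / (ε / 2)) =
        T * (32 / ε ^ 2) * (t ^ (-(ε / 2)) * t ^ (ε / 2)) / (ε / 2) := by ring
    rw [c1, c2, hneg, hneg2]
    field_simp
    ring
  constructor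
  · calc (∫ s in Set.Ioc (0:ℝ) t, tau p lam s ^ 2 * (1 + Real.log (tstar / s) ^ 2) / s)
        ≤ ∫ s in Set.Ioc (0:ℝ) t, g s :=
          setIntegral_mono_on hf_int hg_int measurableSet_Ioc key
      _ = T * (1 + 2 * L ^ 2) / ε + T * (64 / ε ^ 3) := hgval
      _ ≤ (2 / ε + 64 / ε ^ 3) * (T * (1 + L ^ 2)) := by
          have h1 : T * (1 + 2 * L ^ 2) / ε ≤ (2 / ε) * (T * (1 + L ^ 2)) := by
            have he : (2 / ε) * (T * (1 + L ^ 2)) - T * (1 + 2 * L ^ 2) / ε = T / ε := by ring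
            nlinarith [div_nonneg hT0 hε.le]
          have h2 : T * (64 / ε ^ 3) ≤ (64 / ε ^ 3) * (T * (1 + L ^ 2)) := by
            have he : (64 / ε ^ 3) * (T * (1 + L ^ 2)) - T * (64 / ε ^ 3) =
                (64 / ε ^ 3) * (T * L ^ 2) := by ring
            nlinarith [mul_nonneg (div_nonneg (by norm_num : (0:ℝ) ≤ 64)
              (pow_nonneg hε.le 3)) (mul_nonneg hT0 (sq_nonneg L))]
          nlinarith [h1, h2]
  · -- boundedness
    set x := tstar / t with hxdef
    have hx1 : 1 ≤ x := (one_le_div ht0').mpr htle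
    have hx0 : 0 < x := lt_of_lt_of_le one_pos hx1
    have hTle : T ≤ x ^ (-ε) := by
      have h := tau_sq_compare (lam := lam) hεle ht0' htle
      rw [htau, one_pow, mul_one] at h
      have : (t / tstar) ^ ε = x ^ (-ε) := by
        rw [hxdef, show t / tstar = (tstar / t)⁻¹ by rw [inv_div],
          Real.inv_rpow (by positivity), ← Real.rpow_neg (by positivity)]
      rwa [this] at h
    have hlogx : L = Real.log x := rfl
    calc T * (1 + L ^ 2) ≤ x ^ (-ε) * (1 + L ^ 2) :=
          mul_le_mul_of_nonneg_right hTle (by positivity)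
      _ = x ^ (-ε) + x ^ (-ε) * L ^ 2 := by ring
      _ ≤ 1 + (16 / ε ^ 2) * x ^ (-(ε / 2)) := by
          have hone : x ^ (-ε) ≤ 1 :=
            Real.rpow_le_one_of_one_le_of_nonpos hx1 (by linarith)
          have htwo : x ^ (-ε) * L ^ 2 ≤ (16 / ε ^ 2) * x ^ (-(ε / 2)) := by
            calc x ^ (-ε) * L ^ 2 ≤ x ^ (-ε) * ((16 / ε ^ 2) * x ^ (ε / 2)) := by
                  apply mul_le_mul_of_nonneg_left _ (Real.rpow_nonneg hx0.le _)
                  rw [hlogx]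
                  exact log_sq_le hε hx1
              _ = (16 / ε ^ 2) * (x ^ (-ε) * x ^ (ε / 2)) := by ring
              _ = (16 / ε ^ 2) * x ^ (-(ε / 2)) := by
                  rw [← Real.rpow_add hx0]
                  congr 2; ring
          linarith
      _ ≤ 1 + 16 / ε ^ 2 := by
          have : x ^ (-(ε / 2)) ≤ 1 :=
            Real.rpow_le_one_of_one_le_of_nonpos hx1 (by linarith)
          nlinarith [this, (by positivity : (0:ℝ) < 16 / ε ^ 2)]


/-- Lemma 3.2 (Lemma `lem:tauint`): integral estimates for powers of τ_λ. -/
theorem tau_integral_estimates (D : ℕ) (hD : 2 ≤ D) (p : Fin D → ℝ) (hp : ∀ i, p i < 1) :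
    (∃ C : ℝ, 0 < C ∧
      ∀ (lam : Fin D → ℤ), lam ≠ 0 →
      ∀ tstar : ℝ, 0 < tstar → tstar ≤ 1 → tau p lam tstar = 1 →
      ∀ α : ℝ, 0 < α →
        (∫ s in tstar..1, tau p lam s ^ (-α) / s) ≤ C / α) ∧
    (∃ C : ℝ, 0 < C ∧
      ∀ (lam : Fin D → ℤ), lam ≠ 0 →
      ∀ tstar : ℝ, 0 < tstar → tstar ≤ 1 → tau p lam tstar = 1 →
      ∀ t : ℝ, t ∈ Set.Ioc (0:ℝ) tstar →
        (∫ s in Set.Ioc (0:ℝ) t, tau p lam s ^ 2 * (1 + Real.log (tstar / s) ^ 2) / s) ≤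
          C * (tau p lam t ^ 2 * (1 + Real.log (tstar / t) ^ 2)) ∧
        C * (tau p lam t ^ 2 * (1 + Real.log (tstar / t) ^ 2)) ≤ C ^ 2) := by
  obtain ⟨i0, -, hi0⟩ := Finset.exists_min_image (Finset.univ : Finset (Fin D))
    (fun i => 2 - 2 * p i) ⟨⟨0, by omega⟩, Finset.mem_univ _⟩
  set ε := 2 - 2 * p i0 with hεdef
  have hε : 0 < ε := by have := hp i0; simp only [hεdef]; linarith
  have hεle : ∀ i, ε ≤ 2 - 2 * p i := fun i => hi0 i (Finset.mem_univ i)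
  constructor
  · refine ⟨2 / ε, by positivity, ?_⟩
    intro lam hlam tstar ht0 ht1 htau α hα
    exact part_one hε hεle lam hlam tstar ht0 ht1 htau α hα
  · set C := max (2 / ε + 64 / ε ^ 3) (1 + 16 / ε ^ 2) with hCdef
    have hC1 : 2 / ε + 64 / ε ^ 3 ≤ C := le_max_left _ _
    have hC2 : 1 + 16 / ε ^ 2 ≤ C := le_max_right _ _
    have hC0 : 0 < C := lt_of_lt_of_le (by positivity) hC1
    refine ⟨C, hC0, ?_⟩
    intro lam hlam tstar ht0 ht1 htau t ht
    obtain ⟨hI, hB⟩ := part_two hε hεle lam hlam tstar ht0 ht1 htau t ht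
    have hX0 : 0 ≤ tau p lam t ^ 2 * (1 + Real.log (tstar / t) ^ 2) :=
      mul_nonneg (sq_nonneg _) (by positivity)
    constructor
    · exact hI.trans (mul_le_mul_of_nonneg_right hC1 hX0)
    · have h1 : tau p lam t ^ 2 * (1 + Real.log (tstar / t) ^ 2) ≤ C := hB.trans hC2
      calc C * (tau p lam t ^ 2 * (1 + Real.log (tstar / t) ^ 2)) ≤ C * C :=
            mul_le_mul_of_nonneg_left h1 hC0.le
        _ = C ^ 2 := (sq C).symm
end

section
/- There exist constants 0 < c ≤ C depending only on D and p_1,…,p_D such that for every λ ∈ ℤ^D \ {0}, every t ≥ t_{λ*}, and all real numbers φ, ψ: c·(ψ²/⟨τ_λ(t)⟩ + ⟨τ_λ(t)⟩·φ²) ≤ ζ_λ(t)²ψ²/τ_λ(t) + ζ_λ(t)ψφ/τ_λ(t) + φ²/(2τ_λ(t)) + ζ_λ(t)²τ_λ(t)φ² ≤ C·(ψ²/⟨τ_λ(t)⟩ + ⟨τ_λ(t)⟩·φ²). In particular, at t = 1 this expression is comparable, with constants depending only on D and the exponents, to ⟨λ⟩^{−1}ψ² + ⟨λ⟩φ². 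-/
open Real Filter MeasureTheory Topology

/-- The Japanese bracket ⟨λ⟩ = (1 + |λ|²)^(1/2) of a frequency λ ∈ ℤ^D. -/
noncomputable def jap {D : ℕ} (lam : Fin D → ℤ) : ℝ :=
  Real.sqrt (1 + ∑ i, ((lam i : ℝ)) ^ 2)

set_option maxHeartbeats 1000000 in
private lemma core_ineq {a b τ ζ : ℝ} (φ ψ : ℝ) (ha : 0 < a) (hτ : 1 ≤ τ)
    (h1 : a ≤ ζ) (h2 : ζ ≤ b) :
    a ^ 2 / 2 * (ψ ^ 2 / Real.sqrt (1 + τ ^ 2) + Real.sqrt (1 + τ ^ 2) * φ ^ 2) ≤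
      ζ ^ 2 * ψ ^ 2 / τ + ζ * ψ * φ / τ + φ ^ 2 / (2 * τ) + ζ ^ 2 * τ * φ ^ 2 ∧
    ζ ^ 2 * ψ ^ 2 / τ + ζ * ψ * φ / τ + φ ^ 2 / (2 * τ) + ζ ^ 2 * τ * φ ^ 2 ≤
      (4 * b ^ 2 + 2) * (ψ ^ 2 / Real.sqrt (1 + τ ^ 2) + Real.sqrt (1 + τ ^ 2) * φ ^ 2) := by
  have hτ0 : 0 < τ := lt_of_lt_of_le one_pos hτ
  set B := Real.sqrt (1 + τ ^ 2) with hB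
  have hB2 : B ^ 2 = 1 + τ ^ 2 := Real.sq_sqrt (by positivity)
  have hB0 : 0 < B := Real.sqrt_pos.2 (by positivity)
  clear_value B
  have hτB : τ ≤ B := by nlinarith
  have hB2τ : B ≤ 2 * τ := by nlinarith
  have hB1 : 1 ≤ B := by nlinarith
  have ha2 : a ^ 2 ≤ ζ ^ 2 := by nlinarith
  have hb2 : ζ ^ 2 ≤ b ^ 2 := by nlinarith
  have hb0 : 0 < b := lt_of_lt_of_le ha (le_trans h1 h2)
  have hζ0 : 0 < ζ := lt_of_lt_of_le ha h1
  have hid : ζ ^ 2 * ψ ^ 2 / τ + ζ * ψ * φ / τ + φ ^ 2 / (2 * τ) + ζ ^ 2 * τ * φ ^ 2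
      = (ζ * ψ + φ) ^ 2 / (2 * τ) + ζ ^ 2 * ψ ^ 2 / (2 * τ) + ζ ^ 2 * τ * φ ^ 2 := by
    field_simp
    ring
  rw [hid]
  have key : ∀ x : ℝ, 0 ≤ x → x / τ ≤ 2 * (x / B) := by
    intro x hx
    have : x / τ ≤ (2 * x) / B := by
      rw [div_le_div_iff₀ hτ0 hB0]
      nlinarith
    linarith [this, (mul_div_assoc (2:ℝ) x B).symm]
  constructor
  · have l1 : a ^ 2 * ψ ^ 2 / (2 * B) ≤ ζ ^ 2 * ψ ^ 2 / (2 * τ) :=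
      div_le_div₀ (by positivity) (by nlinarith [sq_nonneg ψ]) (by positivity) (by linarith)
    have l2 : a ^ 2 / 2 * (B * φ ^ 2) ≤ ζ ^ 2 * τ * φ ^ 2 := by
      nlinarith [sq_nonneg φ, mul_le_mul_of_nonneg_right (mul_le_mul ha2 hB2τ (le_of_lt hB0) (by positivity)) (sq_nonneg φ)]
    have l3 : 0 ≤ (ζ * ψ + φ) ^ 2 / (2 * τ) := by positivity
    have e1 : a ^ 2 / 2 * (ψ ^ 2 / B) = a ^ 2 * ψ ^ 2 / (2 * B) := by ring
    linarith [e1 ▸ l1]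
  · have hnum : (ζ * ψ + φ) ^ 2 ≤ 2 * ζ ^ 2 * ψ ^ 2 + 2 * φ ^ 2 := by
      nlinarith [sq_nonneg (ζ * ψ - φ)]
    calc (ζ * ψ + φ) ^ 2 / (2 * τ) + ζ ^ 2 * ψ ^ 2 / (2 * τ) + ζ ^ 2 * τ * φ ^ 2
        ≤ (2 * ζ ^ 2 * ψ ^ 2 + 2 * φ ^ 2) / (2 * τ) + ζ ^ 2 * ψ ^ 2 / (2 * τ) + ζ ^ 2 * τ * φ ^ 2 := by
          gcongr
      _ = (3 * ζ ^ 2 / 2) * (ψ ^ 2 / τ) + φ ^ 2 / τ + ζ ^ 2 * (τ * φ ^ 2) := by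
          field_simp; ring
      _ ≤ (3 * b ^ 2 / 2) * (ψ ^ 2 / τ) + φ ^ 2 / τ + b ^ 2 * (τ * φ ^ 2) := by
          gcongr <;> positivity
      _ ≤ (3 * b ^ 2 / 2) * (2 * (ψ ^ 2 / B)) + 2 * (φ ^ 2 / B) + b ^ 2 * (B * φ ^ 2) := by
          refine add_le_add (add_le_add ?_ ?_) ?_
          · exact mul_le_mul_of_nonneg_left (key _ (sq_nonneg ψ)) (by positivity)
          · exact key _ (sq_nonneg φ)
          · exact mul_le_mul_of_nonneg_left (mul_le_mul_of_nonneg_right hτB (sq_nonneg φ)) (by positivity)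
      _ ≤ (4 * b ^ 2 + 2) * (ψ ^ 2 / B + B * φ ^ 2) := by
          have h1' : 0 ≤ ψ ^ 2 / B := by positivity
          have h2' : 0 ≤ B * φ ^ 2 := by positivity
          have h3' : φ ^ 2 / B ≤ B * φ ^ 2 := by
            rw [div_le_iff₀ hB0]; nlinarith [sq_nonneg φ]
          nlinarith [mul_nonneg (sq_nonneg b) h1', mul_nonneg (sq_nonneg b) h2', h3',
            mul_le_mul_of_nonneg_left h3' (by norm_num : (0:ℝ) ≤ 2)]

private lemma tau_mono {D : ℕ} (p : Fin D → ℝ) (hp : ∀ i, p i < 1) (lam : Fin D → ℤ)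
    {s t : ℝ} (hs : 0 < s) (hst : s ≤ t) : tau p lam s ≤ tau p lam t := by
  unfold tau
  apply Real.sqrt_le_sqrt
  apply Finset.sum_le_sum
  intro i _
  have h1 : s ^ (2 - 2 * p i) ≤ t ^ (2 - 2 * p i) :=
    Real.rpow_le_rpow (le_of_lt hs) hst (by nlinarith [hp i])
  exact mul_le_mul_of_nonneg_right h1 (sq_nonneg _)

private lemma zeta_bounds {D : ℕ} (p : Fin D → ℝ) (lam : Fin D → ℤ)
    {t : ℝ} (ht : 0 < t) (hτ : 1 ≤ tau p lam t) (m M : ℝ) (hm : 0 < m) (hM : 0 < M)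
    (hb : ∀ i, m ≤ 2 - 2 * p i ∧ 2 - 2 * p i ≤ M) :
    2 / M ≤ zeta p lam t ∧ zeta p lam t ≤ 2 / m := by
  set T := ∑ i, t ^ (2 - 2 * p i) * ((lam i : ℝ)) ^ 2 with hT
  have hT0 : 0 ≤ T := by
    apply Finset.sum_nonneg
    intro i _
    exact mul_nonneg (Real.rpow_nonneg (le_of_lt ht) _) (sq_nonneg _)
  have hτT : tau p lam t ^ 2 = T := Real.sq_sqrt hT0
  have hT1 : 1 ≤ T := by nlinarith
  set S := ∑ i, (2 - 2 * p i) * t ^ (2 - 2 * p i) * ((lam i : ℝ)) ^ 2 with hS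
  have hSl : m * T ≤ S := by
    rw [hT, Finset.mul_sum, hS]
    apply Finset.sum_le_sum
    intro i _
    have := (hb i).1
    have hnn : 0 ≤ t ^ (2 - 2 * p i) * ((lam i : ℝ)) ^ 2 :=
      mul_nonneg (Real.rpow_nonneg (le_of_lt ht) _) (sq_nonneg _)
    calc m * (t ^ (2 - 2 * p i) * ((lam i : ℝ)) ^ 2) ≤
        (2 - 2 * p i) * (t ^ (2 - 2 * p i) * ((lam i : ℝ)) ^ 2) :=
          mul_le_mul_of_nonneg_right this hnn
      _ = (2 - 2 * p i) * t ^ (2 - 2 * p i) * ((lam i : ℝ)) ^ 2 := by ring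
  have hSu : S ≤ M * T := by
    rw [hT, Finset.mul_sum, hS]
    apply Finset.sum_le_sum
    intro i _
    have := (hb i).2
    have hnn : 0 ≤ t ^ (2 - 2 * p i) * ((lam i : ℝ)) ^ 2 :=
      mul_nonneg (Real.rpow_nonneg (le_of_lt ht) _) (sq_nonneg _)
    calc (2 - 2 * p i) * t ^ (2 - 2 * p i) * ((lam i : ℝ)) ^ 2
        = (2 - 2 * p i) * (t ^ (2 - 2 * p i) * ((lam i : ℝ)) ^ 2) := by ring
      _ ≤ M * (t ^ (2 - 2 * p i) * ((lam i : ℝ)) ^ 2) := mul_le_mul_of_nonneg_right this hnn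
  have hS0 : 0 < S := by nlinarith
  have hz : zeta p lam t = 2 * T / S := by rw [zeta, hτT]
  rw [hz]
  constructor
  · rw [div_le_div_iff₀ hM hS0]
    nlinarith
  · rw [div_le_div_iff₀ hS0 hm]
    nlinarith

private lemma tau_one_ge {D : ℕ} (p : Fin D → ℝ) (lam : Fin D → ℤ) (hlam : lam ≠ 0) :
    1 ≤ tau p lam 1 ∧ tau p lam 1 ^ 2 = ∑ i, ((lam i : ℝ)) ^ 2 := by
  have hsum : ∑ i, (1:ℝ) ^ (2 - 2 * p i) * ((lam i : ℝ)) ^ 2 = ∑ i, ((lam i : ℝ)) ^ 2 := by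
    apply Finset.sum_congr rfl
    intro i _
    rw [Real.one_rpow, one_mul]
  obtain ⟨i, hi⟩ : ∃ i, lam i ≠ 0 := Function.ne_iff.1 hlam
  have h1 : (1:ℤ) ≤ (lam i) ^ 2 := by rcases lt_or_gt_of_ne hi with h | h <;> nlinarith
  have h1' : (1:ℝ) ≤ ((lam i : ℝ)) ^ 2 := by exact_mod_cast h1
  have hsum1 : (1:ℝ) ≤ ∑ i, ((lam i : ℝ)) ^ 2 :=
    le_trans h1' (Finset.single_le_sum (fun j _ => sq_nonneg ((lam j : ℝ))) (Finset.mem_univ i))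
  have hτsq : tau p lam 1 ^ 2 = ∑ i, ((lam i : ℝ)) ^ 2 := by
    rw [tau, hsum, Real.sq_sqrt (by positivity)]
  refine ⟨?_, hτsq⟩
  have hτ0 : 0 ≤ tau p lam 1 := by unfold tau; exact Real.sqrt_nonneg _
  nlinarith [hτ0, hτsq, hsum1]

/-- Coercivity of the high-frequency wave energy (Corollary `cor:wave_high_coercive`). -/
theorem wave_high_energy_coercive (D : ℕ) (hD : 2 ≤ D) (p : Fin D → ℝ) (hp : ∀ i, p i < 1) :
    (∃ c C : ℝ, 0 < c ∧ c ≤ C ∧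
      ∀ (lam : Fin D → ℤ), lam ≠ 0 →
      ∀ tstar : ℝ, 0 < tstar → tstar ≤ 1 → tau p lam tstar = 1 →
      ∀ t : ℝ, tstar ≤ t → ∀ φ ψ : ℝ,
        c * (ψ ^ 2 / Real.sqrt (1 + tau p lam t ^ 2)
              + Real.sqrt (1 + tau p lam t ^ 2) * φ ^ 2) ≤
          zeta p lam t ^ 2 * ψ ^ 2 / tau p lam t + zeta p lam t * ψ * φ / tau p lam t
            + φ ^ 2 / (2 * tau p lam t) + zeta p lam t ^ 2 * tau p lam t * φ ^ 2 ∧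
        zeta p lam t ^ 2 * ψ ^ 2 / tau p lam t + zeta p lam t * ψ * φ / tau p lam t
            + φ ^ 2 / (2 * tau p lam t) + zeta p lam t ^ 2 * tau p lam t * φ ^ 2 ≤
          C * (ψ ^ 2 / Real.sqrt (1 + tau p lam t ^ 2)
              + Real.sqrt (1 + tau p lam t ^ 2) * φ ^ 2)) ∧
    (∃ c' C' : ℝ, 0 < c' ∧ c' ≤ C' ∧
      ∀ (lam : Fin D → ℤ), lam ≠ 0 → ∀ φ ψ : ℝ,
        c' * ((jap lam)⁻¹ * ψ ^ 2 + jap lam * φ ^ 2) ≤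
          zeta p lam 1 ^ 2 * ψ ^ 2 / tau p lam 1 + zeta p lam 1 * ψ * φ / tau p lam 1
            + φ ^ 2 / (2 * tau p lam 1) + zeta p lam 1 ^ 2 * tau p lam 1 * φ ^ 2 ∧
        zeta p lam 1 ^ 2 * ψ ^ 2 / tau p lam 1 + zeta p lam 1 * ψ * φ / tau p lam 1
            + φ ^ 2 / (2 * tau p lam 1) + zeta p lam 1 ^ 2 * tau p lam 1 * φ ^ 2 ≤
          C' * ((jap lam)⁻¹ * ψ ^ 2 + jap lam * φ ^ 2)) := by
  have hne : Nonempty (Fin D) := ⟨⟨0, by omega⟩⟩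
  have huniv : (Finset.univ : Finset (Fin D)).Nonempty := Finset.univ_nonempty
  set m : ℝ := Finset.univ.inf' huniv (fun i => 2 - 2 * p i) with hmdef
  set M : ℝ := Finset.univ.sup' huniv (fun i => 2 - 2 * p i) with hMdef
  have hm : 0 < m := by
    rw [hmdef, Finset.lt_inf'_iff]
    intro i _
    nlinarith [hp i]
  have hbnd : ∀ i, m ≤ 2 - 2 * p i ∧ 2 - 2 * p i ≤ M := by
    intro i
    constructor
    · rw [hmdef]; exact Finset.inf'_le _ (Finset.mem_univ i)
    · rw [hMdef]; exact Finset.le_sup' (fun j => 2 - 2 * p j) (Finset.mem_univ i)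
  have hmM : m ≤ M := le_trans (hbnd (Classical.arbitrary (Fin D))).1
    (hbnd (Classical.arbitrary (Fin D))).2
  have hM : 0 < M := lt_of_lt_of_le hm hmM
  have ha0 : 0 < 2 / M := by positivity
  have hab : 2 / M ≤ 2 / m := by
    rw [div_le_div_iff₀ hM hm]; nlinarith
  refine ⟨⟨(2 / M) ^ 2 / 2, 4 * (2 / m) ^ 2 + 2, by positivity, by nlinarith, ?_⟩, ?_⟩
  · intro lam hlam tstar hts0 hts1 htseq t hstt φ ψ
    have ht0 : 0 < t := lt_of_lt_of_le hts0 hstt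
    have hτ1 : 1 ≤ tau p lam t := by
      rw [← htseq]; exact tau_mono p hp lam hts0 hstt
    obtain ⟨hz1, hz2⟩ := zeta_bounds p lam ht0 hτ1 m M hm hM hbnd
    exact core_ineq φ ψ ha0 hτ1 hz1 hz2
  · refine ⟨(2 / M) ^ 2 / 2, 4 * (2 / m) ^ 2 + 2, by positivity, by nlinarith, ?_⟩
    intro lam hlam φ ψ
    obtain ⟨hτ1, hτsq⟩ := tau_one_ge p lam hlam
    have hjap : jap lam = Real.sqrt (1 + tau p lam 1 ^ 2) := by rw [jap, hτsq]
    obtain ⟨hz1, hz2⟩ := zeta_bounds p lam one_pos hτ1 m M hm hM hbnd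
    have := core_ineq (a := 2 / M) (b := 2 / m) (τ := tau p lam 1) (ζ := zeta p lam 1)
      φ ψ ha0 hτ1 hz1 hz2
    rw [hjap, inv_mul_eq_div]
    exact this
end

section
/- (Forward scattering bound with half-derivative gain.) Let s ∈ ℝ and, for each λ ∈ ℤ^D \ {0}, let (φ_λ, ψ_λ) be a λ-mode wave solution on (0,∞); assume M := ∑_{λ∈ℤ^D\{0}} (⟨λ⟩^{2s+2}·φ_λ(1)² + ⟨λ⟩^{2s}·ψ_λ(1)²) < ∞. Then for every λ the limits ψ_{∞,λ} := lim_{t→0⁺} ψ_λ(t) and φ̃_{∞,λ} := lim_{t→0⁺} (φ_λ(t) − ψ_λ(t)·log(t/t_{λ*})) exist, and ∑_{λ∈ℤ^D\{0}} ⟨λ⟩^{2s+1}·(ψ_{∞,λ}² + φ̃_{∞,λ}²) ≤ C·M, where C > 0 depends only on D and p_1,…,p_D (in particular not on s). -/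
open Real Filter MeasureTheory Topology

/-- A λ-mode wave solution on the set `I`: t φ' = ψ and t ψ' = -τ_λ(t)² φ. -/
def IsWaveSol {D : ℕ} (p : Fin D → ℝ) (lam : Fin D → ℤ) (φ ψ : ℝ → ℝ) (I : Set ℝ) : Prop :=
  ∀ t ∈ I, HasDerivAt φ (ψ t / t) t ∧ HasDerivAt ψ (-(tau p lam t ^ 2) * φ t / t) t

/-!
On `[t_*, 1]`, where `τ ≥ 1`, the modified energy `E_high` satisfies `E' = ζ' ∂_ζ E − φ²/(2ζτt)`.
Here `ζ = τ/(tτ')` is nonincreasing (Cauchy–Schwarz) and lies in `[2/b, 2/a]` when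
`a ≤ 2 − 2pᵢ ≤ b`, and the loss term is at most `c τ'/τ³ · E`; so `E_high · exp (−Kζ − c/(2τ²))` is
nondecreasing, which gives `ψ(t_*)² + φ(t_*)² ≲ ψ(1)²/|λ| + |λ| φ(1)²` uniformly in `λ`.
On `(0, t_*]` one has `τ² ≤ (t/t_*)^a`, so the low energy `ψ² + φ̃²` has logarithmic derivative
at most `2 (t/t_*)^a (1 − log (t/t_*))² / t`, which has an explicit bounded primitive. This bounds
the low energy by its value at `t_*` and makes `ψ'` and `φ̃'` integrable at `0`, so the
scattering limits exist. Finally `|λ| ≤ ⟨λ⟩ ≤ 2|λ|` turns `⟨λ⟩ (ψ(1)²/|λ| + |λ| φ(1)²)` into the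
`H^{s+1} × H^s` weights, with a constant independent of `s`.
-/

open Set

lemma monotoneOn_of_hasDerivAt_nonneg_interior {D : Set ℝ} (hD : Convex ℝ D) {f f' : ℝ → ℝ}
    (hf : ∀ t ∈ D, HasDerivAt f (f' t) t) (hf' : ∀ t ∈ interior D, 0 ≤ f' t) :
    MonotoneOn f D :=
  monotoneOn_of_hasDerivWithinAt_nonneg hD (fun t ht => (hf t ht).continuousAt.continuousWithinAt)
    (fun t ht => (hf t (interior_subset ht)).hasDerivWithinAt) hf'

theorem mul_exp_le_mul_exp_of_deriv {E E' g g' : ℝ → ℝ} {x y : ℝ} (hxy : x ≤ y)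
    (hE : ∀ t ∈ Icc x y, HasDerivAt E (E' t) t) (hg : ∀ t ∈ Icc x y, HasDerivAt g (g' t) t)
    (h : ∀ t ∈ Ioo x y, 0 ≤ E' t + g' t * E t) :
    E x * exp (g x) ≤ E y * exp (g y) := by
  refine monotoneOn_of_hasDerivAt_nonneg_interior (convex_Icc x y)
    (f := fun t => E t * exp (g t)) (f' := fun t => (E' t + g' t * E t) * exp (g t))
    (fun t ht => ?_) (fun t ht => ?_)
    (left_mem_Icc.2 hxy) (right_mem_Icc.2 hxy) hxy
  · exact ((hE t ht).mul (hg t ht).exp).congr_deriv (by ring)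
  · rw [interior_Icc] at ht
    exact mul_nonneg (h t ht) (exp_pos _).le

theorem exists_tendsto_nhdsGT_of_abs_deriv_le {f f' G G' : ℝ → ℝ} {a b : ℝ} (hab : a < b)
    (hf : ∀ t ∈ Ioc a b, HasDerivAt f (f' t) t) (hG : ∀ t ∈ Ioc a b, HasDerivAt G (G' t) t)
    (hle : ∀ t ∈ Ioo a b, |f' t| ≤ G' t) (hGb : BddBelow (G '' Ioc a b)) :
    ∃ l, Tendsto f (𝓝[>] a) (𝓝 l) := by
  have mono : ∀ c : ℝ, |c| ≤ 1 → MonotoneOn (fun t => G t + c * f t) (Ioc a b) := by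
    intro c hc
    refine monotoneOn_of_hasDerivAt_nonneg_interior (convex_Ioc a b)
      (fun t ht => (hG t ht).add ((hf t ht).const_mul c)) (fun t ht => ?_)
    rw [interior_Ioc] at ht
    have : |c * f' t| ≤ G' t := by
      rw [abs_mul]
      exact (mul_le_of_le_one_left (abs_nonneg _) hc).trans (hle t ht)
    linarith [neg_abs_le (c * f' t)]
  have mono_G : MonotoneOn G (Ioc a b) := by simpa using mono 0 (by norm_num)
  have mono_add : MonotoneOn (fun t => G t + f t) (Ioc a b) := by simpa using mono 1 (by norm_num)
  have bdd_add : BddBelow ((fun t => G t + f t) '' Ioc a b) := by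
    obtain ⟨B, hB⟩ := hGb
    refine ⟨2 * B - (G b - f b), ?_⟩
    rintro _ ⟨t, ht, rfl⟩
    have h1 := mono (-1) (by norm_num) ht (right_mem_Ioc.2 hab) ht.2
    have h2 := hB (mem_image_of_mem G ht)
    simp only [neg_mul, one_mul] at h1
    linarith
  have hne : (Ioo a b).Nonempty := nonempty_Ioo.2 hab
  have lim_add := (mono_add.mono Ioo_subset_Ioc_self).tendsto_nhdsWithin_Ioo_right hne
    (bdd_add.mono (image_mono Ioo_subset_Ioc_self))
  have lim_G := (mono_G.mono Ioo_subset_Ioc_self).tendsto_nhdsWithin_Ioo_right hne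
    (hGb.mono (image_mono Ioo_subset_Ioc_self))
  exact ⟨_, (lim_add.sub lim_G).congr fun t => by simp⟩

lemma summable_and_tsum_le_mul {ι : Type*} {f g : ι → ℝ} {C : ℝ} (hf : ∀ i, 0 ≤ f i)
    (hfg : ∀ i, f i ≤ C * g i) (hg : Summable g) : Summable f ∧ ∑' i, f i ≤ C * ∑' i, g i := by
  have hCg := hg.mul_left C
  have hsf := hCg.of_nonneg_of_le hf hfg
  exact ⟨hsf, (hsf.tsum_le_tsum hfg hCg).trans_eq tsum_mul_left⟩

namespace WaveMode

noncomputable def highEnergy (ζ τ φ ψ : ℝ) : ℝ :=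
  ζ ^ 2 * ψ ^ 2 / τ + ζ * ψ * φ / τ + φ ^ 2 / (2 * τ) + ζ ^ 2 * τ * φ ^ 2

section HighEnergy

variable {ζ τ φ ψ M : ℝ}

lemma sq_div_two_mul_le_highEnergy {m : ℝ} (hm : 0 ≤ m) (hmζ : m ≤ ζ) (hτ : 0 < τ) :
    m ^ 2 / 2 * (ψ ^ 2 / τ + τ * φ ^ 2) ≤ highEnergy ζ τ φ ψ := by
  have : 0 ≤ (ζ * ψ + φ) ^ 2 / (2 * τ) + ζ ^ 2 * τ * φ ^ 2 / 2 := by positivity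
  calc m ^ 2 / 2 * (ψ ^ 2 / τ + τ * φ ^ 2) ≤ ζ ^ 2 / 2 * (ψ ^ 2 / τ + τ * φ ^ 2) := by gcongr
    _ ≤ ζ ^ 2 / 2 * (ψ ^ 2 / τ + τ * φ ^ 2) +
        ((ζ * ψ + φ) ^ 2 / (2 * τ) + ζ ^ 2 * τ * φ ^ 2 / 2) := le_add_of_nonneg_right this
    _ = highEnergy ζ τ φ ψ := by unfold highEnergy; field_simp; ring

lemma highEnergy_le (hζ : 0 ≤ ζ) (hζM : ζ ≤ M) (hτ : 1 ≤ τ) :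
    highEnergy ζ τ φ ψ ≤ (M ^ 2 + M + 1) * (ψ ^ 2 / τ + τ * φ ^ 2) := by
  have hτ0 : 0 < τ := one_pos.trans_le hτ
  have hM : 0 ≤ M := hζ.trans hζM
  have hφ : φ ^ 2 ≤ τ ^ 2 * φ ^ 2 := le_mul_of_one_le_left (sq_nonneg φ) (one_le_pow₀ hτ)
  have hcross : ζ * ψ * φ ≤ M * (ψ ^ 2 + φ ^ 2) / 2 := by
    nlinarith [mul_nonneg hζ (sq_nonneg (ψ - φ)), mul_le_mul_of_nonneg_right hζM
      (add_nonneg (sq_nonneg ψ) (sq_nonneg φ))]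
  have hζ2 : ζ ^ 2 ≤ M ^ 2 := pow_le_pow_left₀ hζ hζM 2
  calc highEnergy ζ τ φ ψ
        = (ζ ^ 2 * ψ ^ 2 + ζ * ψ * φ + φ ^ 2 / 2 + ζ ^ 2 * (τ ^ 2 * φ ^ 2)) / τ := by
        unfold highEnergy; field_simp
    _ ≤ (M ^ 2 + M + 1) * (ψ ^ 2 + τ ^ 2 * φ ^ 2) / τ := by
        gcongr
        nlinarith [mul_le_mul_of_nonneg_right hζ2 (sq_nonneg ψ),
          mul_le_mul_of_nonneg_right hζ2 (mul_nonneg (sq_nonneg τ) (sq_nonneg φ)),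
          mul_le_mul_of_nonneg_left hφ hM, sq_nonneg ψ, sq_nonneg φ]
    _ = (M ^ 2 + M + 1) * (ψ ^ 2 / τ + τ * φ ^ 2) := by field_simp

-- the left-hand side is `∂ highEnergy / ∂ζ`
lemma zetaDeriv_highEnergy_le (hζM : ζ ≤ M) (hτ : 1 ≤ τ) :
    2 * ζ * ψ ^ 2 / τ + ψ * φ / τ + 2 * ζ * τ * φ ^ 2 ≤ (2 * M + 1) * (ψ ^ 2 / τ + τ * φ ^ 2) := by
  have hτ0 : 0 < τ := one_pos.trans_le hτ
  have hφ : φ ^ 2 ≤ τ ^ 2 * φ ^ 2 := le_mul_of_one_le_left (sq_nonneg φ) (one_le_pow₀ hτ)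
  calc 2 * ζ * ψ ^ 2 / τ + ψ * φ / τ + 2 * ζ * τ * φ ^ 2
      = (2 * ζ * ψ ^ 2 + ψ * φ + 2 * ζ * (τ ^ 2 * φ ^ 2)) / τ := by field_simp
    _ ≤ (2 * M + 1) * (ψ ^ 2 + τ ^ 2 * φ ^ 2) / τ := by
        gcongr
        nlinarith [mul_le_mul_of_nonneg_right hζM (sq_nonneg ψ), sq_nonneg (ψ - φ),
          mul_le_mul_of_nonneg_right hζM (mul_nonneg (sq_nonneg τ) (sq_nonneg φ))]
    _ = (2 * M + 1) * (ψ ^ 2 / τ + τ * φ ^ 2) := by field_simp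

lemma highEnergy_deriv_add_weight_nonneg {m ζ' t : ℝ} (hm : 0 < m) (ht : 0 < t) (hmζ : m ≤ ζ)
    (hζM : ζ ≤ M) (hτ : 1 ≤ τ) (hζ' : ζ' ≤ 0) :
    0 ≤ ζ' * (2 * ζ * ψ ^ 2 / τ + ψ * φ / τ + 2 * ζ * τ * φ ^ 2) - φ ^ 2 / (2 * ζ * τ * t) +
      (-(2 * (2 * M + 1) / m ^ 2 * ζ') + 1 / (m ^ 2 * ζ * τ ^ 2 * t)) * highEnergy ζ τ φ ψ := by
  have hζ : 0 < ζ := hm.trans_le hmζ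
  have hτ0 : 0 < τ := one_pos.trans_le hτ
  have lower := sq_div_two_mul_le_highEnergy (φ := φ) (ψ := ψ) hm.le hmζ hτ0
  have hzeta : 2 * ζ * ψ ^ 2 / τ + ψ * φ / τ + 2 * ζ * τ * φ ^ 2 ≤
      2 * (2 * M + 1) / m ^ 2 * highEnergy ζ τ φ ψ := by
    refine (zetaDeriv_highEnergy_le hζM hτ).trans ?_
    rw [div_mul_eq_mul_div, le_div_iff₀ (by positivity)]
    nlinarith [mul_le_mul_of_nonneg_left lower (by linarith : (0 : ℝ) ≤ 2 * M + 1)]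
  -- the loss `φ²/(2ζτt) = τ'φ²/(2τ²)` is absorbed by the `1/(2m²τ²)` part of the weight
  have hloss : φ ^ 2 / (2 * ζ * τ * t) ≤ highEnergy ζ τ φ ψ / (m ^ 2 * ζ * τ ^ 2 * t) := by
    rw [div_le_div_iff₀ (by positivity) (by positivity)]
    have : m ^ 2 * τ * φ ^ 2 ≤ 2 * highEnergy ζ τ φ ψ := by
      nlinarith [div_nonneg (sq_nonneg ψ) hτ0.le]
    nlinarith [mul_le_mul_of_nonneg_right this (by positivity : (0 : ℝ) ≤ ζ * τ * t)]
  rw [add_mul, neg_mul, one_div_mul_eq_div]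
  linarith [mul_le_mul_of_nonpos_left hzeta hζ']

end HighEnergy

section HighFrequency

variable {τ ζ ζ' φ ψ : ℝ → ℝ} {t : ℝ}

lemma hasDerivAt_highEnergy (ht : t ≠ 0) (hζ0 : ζ t ≠ 0) (hτ0 : τ t ≠ 0)
    (hτ : HasDerivAt τ (τ t / (t * ζ t)) t) (hζ : HasDerivAt ζ (ζ' t) t)
    (hφ : HasDerivAt φ (ψ t / t) t) (hψ : HasDerivAt ψ (-(τ t ^ 2) * φ t / t) t) :
    HasDerivAt (fun s => highEnergy (ζ s) (τ s) (φ s) (ψ s))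
      (ζ' t * (2 * ζ t * ψ t ^ 2 / τ t + ψ t * φ t / τ t + 2 * ζ t * τ t * φ t ^ 2) -
        φ t ^ 2 / (2 * ζ t * τ t * t)) t := by
  have H := ((((hζ.fun_pow 2).mul (hψ.fun_pow 2)).div hτ hτ0).add
    (((hζ.mul hψ).mul hφ).div hτ hτ0)).add ((hφ.fun_pow 2).div (hτ.const_mul 2)
    (mul_ne_zero two_ne_zero hτ0))
    |>.add (((hζ.fun_pow 2).mul hτ).mul (hφ.fun_pow 2))
  refine H.congr_deriv ?_
  simp only [Pi.mul_apply]
  field_simp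
  ring

theorem highEnergy_le_exp_mul {m M x y : ℝ} (hm : 0 < m) (hx : 0 < x) (hxy : x ≤ y)
    (hτ : ∀ t ∈ Icc x y, HasDerivAt τ (τ t / (t * ζ t)) t) (hτ1 : ∀ t ∈ Icc x y, 1 ≤ τ t)
    (hζ : ∀ t ∈ Icc x y, HasDerivAt ζ (ζ' t) t) (hζ' : ∀ t ∈ Icc x y, ζ' t ≤ 0)
    (hζm : ∀ t ∈ Icc x y, m ≤ ζ t) (hζM : ∀ t ∈ Icc x y, ζ t ≤ M)
    (hφ : ∀ t ∈ Icc x y, HasDerivAt φ (ψ t / t) t)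
    (hψ : ∀ t ∈ Icc x y, HasDerivAt ψ (-(τ t ^ 2) * φ t / t) t) :
    highEnergy (ζ x) (τ x) (φ x) (ψ x) ≤
      exp (2 * (2 * M + 1) / m ^ 2 * (M - m) + 1 / (2 * m ^ 2)) *
        highEnergy (ζ y) (τ y) (φ y) (ψ y) := by
  set K := 2 * (2 * M + 1) / m ^ 2
  set E := fun t => highEnergy (ζ t) (τ t) (φ t) (ψ t)
  set g := fun s => -(K * ζ s + 1 / (2 * m ^ 2 * τ s ^ 2)) with hg_def
  have pos : ∀ t ∈ Icc x y, 0 < t ∧ 0 < ζ t ∧ 0 < τ t := fun t ht =>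
    ⟨hx.trans_le ht.1, hm.trans_le (hζm t ht), one_pos.trans_le (hτ1 t ht)⟩
  have hg : ∀ t ∈ Icc x y, HasDerivAt g (-(K * ζ' t) + 1 / (m ^ 2 * ζ t * τ t ^ 2 * t)) t := by
    intro t ht
    obtain ⟨ht0, hζ0, hτ0⟩ := pos t ht
    refine (((hζ t ht).const_mul K).add ((hasDerivAt_const t 1).div (((hτ t ht).fun_pow 2).const_mul
      (2 * m ^ 2)) (by positivity))).neg.congr_deriv ?_
    field_simp
    ring
  have mono := mul_exp_le_mul_exp_of_deriv hxy (E := E) (fun t ht => hasDerivAt_highEnergy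
    (pos t ht).1.ne' (pos t ht).2.1.ne' (pos t ht).2.2.ne' (hτ t ht) (hζ t ht) (hφ t ht) (hψ t ht))
    hg fun t ht => by
      have ht' := Ioo_subset_Icc_self ht
      exact highEnergy_deriv_add_weight_nonneg hm (pos t ht').1 (hζm t ht') (hζM t ht')
        (hτ1 t ht') (hζ' t ht')
  have hx' : x ∈ Icc x y := left_mem_Icc.2 hxy
  have hy' : y ∈ Icc x y := right_mem_Icc.2 hxy
  have hK0 : 0 ≤ K := by have := hm.le.trans ((hζm x hx').trans (hζM x hx')); positivity
  have hgx : -(K * M + 1 / (2 * m ^ 2)) ≤ g x := by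
    have : 1 / (2 * m ^ 2 * τ x ^ 2) ≤ 1 / (2 * m ^ 2) := one_div_le_one_div_of_le (by positivity)
      (le_mul_of_one_le_right (by positivity) (one_le_pow₀ (hτ1 x hx')))
    have := mul_le_mul_of_nonneg_left (hζM x hx') hK0
    simp only [hg_def]
    linarith
  have hgy : g y ≤ -(K * m) := by
    have := mul_le_mul_of_nonneg_left (hζm y hy') hK0
    have : 0 ≤ 1 / (2 * m ^ 2 * τ y ^ 2) := by positivity
    simp only [hg_def]
    linarith
  have hEy : 0 ≤ E y := (sq_div_two_mul_le_highEnergy hm.le (hζm y hy') (pos y hy').2.2).trans'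
    (by have := (pos y hy').2.2; positivity)
  calc E x = E x * exp (g x) * exp (-g x) := by rw [mul_assoc, ← exp_add]; simp
    _ ≤ E y * exp (g y) * exp (-g x) := by gcongr
    _ = exp (g y - g x) * E y := by rw [sub_eq_add_neg, exp_add]; ring
    _ ≤ exp (K * (M - m) + 1 / (2 * m ^ 2)) * E y := by gcongr; linarith

theorem highFrequency_sq_add_sq_le {m M x y : ℝ} (hm : 0 < m) (hx : 0 < x)
    (hxy : x ≤ y) (hτ : ∀ t ∈ Icc x y, HasDerivAt τ (τ t / (t * ζ t)) t)
    (hτ1 : ∀ t ∈ Icc x y, 1 ≤ τ t) (hτx : τ x = 1)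
    (hζ : ∀ t ∈ Icc x y, HasDerivAt ζ (ζ' t) t) (hζ' : ∀ t ∈ Icc x y, ζ' t ≤ 0)
    (hζm : ∀ t ∈ Icc x y, m ≤ ζ t) (hζM : ∀ t ∈ Icc x y, ζ t ≤ M)
    (hφ : ∀ t ∈ Icc x y, HasDerivAt φ (ψ t / t) t)
    (hψ : ∀ t ∈ Icc x y, HasDerivAt ψ (-(τ t ^ 2) * φ t / t) t) :
    ψ x ^ 2 + φ x ^ 2 ≤ 2 / m ^ 2 * exp (2 * (2 * M + 1) / m ^ 2 * (M - m) + 1 / (2 * m ^ 2)) *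
      (M ^ 2 + M + 1) * (ψ y ^ 2 / τ y + τ y * φ y ^ 2) := by
  have hx' : x ∈ Icc x y := left_mem_Icc.2 hxy
  have hy' : y ∈ Icc x y := right_mem_Icc.2 hxy
  have lower : m ^ 2 / 2 * (ψ x ^ 2 + φ x ^ 2) ≤ highEnergy (ζ x) (τ x) (φ x) (ψ x) := by
    have := sq_div_two_mul_le_highEnergy (φ := φ x) (ψ := ψ x) hm.le (hζm x hx')
      (hτx ▸ one_pos : 0 < τ x)
    rw [hτx, div_one, one_mul] at this
    rwa [hτx]
  have upper := highEnergy_le (φ := φ y) (ψ := ψ y) (hm.le.trans (hζm y hy')) (hζM y hy')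
    (hτ1 y hy')
  have growth := highEnergy_le_exp_mul hm hx hxy hτ hτ1 hζ hζ' hζm hζM hφ hψ
  calc ψ x ^ 2 + φ x ^ 2 = 2 / m ^ 2 * (m ^ 2 / 2 * (ψ x ^ 2 + φ x ^ 2)) := by field_simp
    _ ≤ 2 / m ^ 2 * (exp (2 * (2 * M + 1) / m ^ 2 * (M - m) + 1 / (2 * m ^ 2)) *
          ((M ^ 2 + M + 1) * (ψ y ^ 2 / τ y + τ y * φ y ^ 2))) := by
        gcongr 2 / m ^ 2 * ?_
        exact lower.trans (growth.trans (by gcongr))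
    _ = _ := by ring

end HighFrequency

-- `q L = 2/a (1 - L + 1/a)² + 2/a³` solves `a q - q' = 2 (1 - L)²`, which gives the derivative
noncomputable def lowWeight (a T t : ℝ) : ℝ :=
  (t / T) ^ a * (2 / a * (1 - log (t / T) + 1 / a) ^ 2 + 2 / a ^ 3)

section LowWeight

variable {a T t : ℝ}

lemma lowWeight_nonneg (ha : 0 < a) (hT : 0 < T) (ht : 0 < t) : 0 ≤ lowWeight a T t := by
  unfold lowWeight; positivity

lemma lowWeight_self (hT : T ≠ 0) : lowWeight a T T = 2 / a * (1 + 1 / a) ^ 2 + 2 / a ^ 3 := by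
  simp [lowWeight, hT]

lemma hasDerivAt_log_div (hT : 0 < T) (ht : 0 < t) : HasDerivAt (fun s => log (s / T)) (1 / t) t :=
  ((hasDerivAt_id' t).div_const T).log (by positivity) |>.congr_deriv (by field_simp)

lemma hasDerivAt_lowWeight (ha : a ≠ 0) (hT : 0 < T) (ht : 0 < t) :
    HasDerivAt (lowWeight a T) (2 * (t / T) ^ a * (1 - log (t / T)) ^ 2 / t) t := by
  have hpow : HasDerivAt (fun s => (s / T) ^ a) (a * (t / T) ^ a / t) t := by
    refine (((hasDerivAt_id' t).div_const T).rpow_const (Or.inl (by positivity))).congr_deriv ?_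
    rw [rpow_sub_one (by positivity)]
    field_simp
  have hq := ((((hasDerivAt_log_div hT ht).const_sub 1).add_const (1 / a)).fun_pow 2).const_mul
    (2 / a) |>.add_const (2 / a ^ 3)
  refine (hpow.mul hq).congr_deriv ?_
  simp only [Nat.reduceSub, pow_one, Nat.cast_ofNat]
  field_simp
  ring

end LowWeight

lemma sq_sub_mul_le {u v L : ℝ} (hL : L ≤ 0) : (u - L * v) ^ 2 ≤ (1 - L) ^ 2 * (u ^ 2 + v ^ 2) := by
  nlinarith [sq_nonneg (L * u + v),
    mul_nonneg (neg_nonneg.2 hL) (add_nonneg (sq_nonneg u) (sq_nonneg v))]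

lemma sq_le_one_sub_sq_mul {φ ψ L : ℝ} (hL : L ≤ 0) :
    φ ^ 2 ≤ (1 - L) ^ 2 * (ψ ^ 2 + (φ - ψ * L) ^ 2) := by
  simpa [neg_sq, mul_comm, add_comm] using sq_sub_mul_le (u := φ - ψ * L) (v := -ψ) hL

section LowEnergy

variable {τ φ ψ : ℝ → ℝ} {a T t : ℝ}

lemma hasDerivAt_renormalized (hT : 0 < T) (ht : 0 < t) (hφ : HasDerivAt φ (ψ t / t) t)
    (hψ : HasDerivAt ψ (-(τ t ^ 2) * φ t / t) t) :
    HasDerivAt (fun s => φ s - ψ s * log (s / T)) (τ t ^ 2 * φ t * log (t / T) / t) t :=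
  (hφ.sub (hψ.mul (hasDerivAt_log_div hT ht))).congr_deriv (by field_simp; ring)

theorem lowEnergy_le_exp_mul (ha : 0 < a) (hT : 0 < T) (hτ : ∀ t ∈ Ioc 0 T, τ t ^ 2 ≤ (t / T) ^ a)
    (hφ : ∀ t ∈ Ioc 0 T, HasDerivAt φ (ψ t / t) t)
    (hψ : ∀ t ∈ Ioc 0 T, HasDerivAt ψ (-(τ t ^ 2) * φ t / t) t) (ht : t ∈ Ioc 0 T) :
    ψ t ^ 2 + (φ t - ψ t * log (t / T)) ^ 2 ≤ exp (lowWeight a T T) * (ψ T ^ 2 + φ T ^ 2) := by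
  set E := fun s => ψ s ^ 2 + (φ s - ψ s * log (s / T)) ^ 2
  have sub : Icc t T ⊆ Ioc 0 T := Icc_subset_Ioc_iff ht.2 |>.2 ⟨ht.1, le_rfl⟩
  have mono := mul_exp_le_mul_exp_of_deriv ht.2 (E := E) (g := lowWeight a T)
    (fun s hs => (hψ s (sub hs)).fun_pow 2 |>.add
      ((hasDerivAt_renormalized hT (sub hs).1 (hφ s (sub hs)) (hψ s (sub hs))).fun_pow 2))
    (fun s hs => hasDerivAt_lowWeight ha.ne' hT (sub hs).1) fun s hs => by
      have hs' := sub (Ioo_subset_Icc_self hs)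
      have hs0 := hs'.1
      set L := log (s / T)
      have hL : L ≤ 0 := log_nonpos (by positivity) ((div_le_one hT).2 hs'.2)
      set φr := φ s - ψ s * L
      have h1 : φ s ^ 2 ≤ (1 - L) ^ 2 * E s := sq_le_one_sub_sq_mul hL
      have h2 : (ψ s - L * φr) ^ 2 ≤ (1 - L) ^ 2 * E s := sq_sub_mul_le hL
      have hprod : φ s * (ψ s - L * φr) ≤ (1 - L) ^ 2 * E s := by
        nlinarith [sq_nonneg (φ s - (ψ s - L * φr))]
      have hτs : τ s ^ 2 * ((1 - L) ^ 2 * E s) ≤ (s / T) ^ a * ((1 - L) ^ 2 * E s) :=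
        mul_le_mul_of_nonneg_right (hτ s hs') (by positivity)
      have key : 0 ≤ (s / T) ^ a * ((1 - L) ^ 2 * E s) - τ s ^ 2 * (φ s * (ψ s - L * φr)) := by
        nlinarith [mul_le_mul_of_nonneg_left hprod (sq_nonneg (τ s))]
      refine (mul_nonneg (by positivity : (0 : ℝ) ≤ 2 / s) key).trans_eq ?_
      simp only [Nat.reduceSub, pow_one, Nat.cast_ofNat]
      field_simp
      ring
  calc E t ≤ E t * exp (lowWeight a T t) :=
        le_mul_of_one_le_right (by positivity) (one_le_exp (lowWeight_nonneg ha hT ht.1))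
    _ ≤ E T * exp (lowWeight a T T) := mono
    _ = exp (lowWeight a T T) * (ψ T ^ 2 + φ T ^ 2) := by simp [E, div_self hT.ne', mul_comm]

-- `ψ'` (with `c = -1`) and `φ̃'` (with `c = log (t / T)`) are both of this form
lemma abs_deriv_le_of_lowEnergy_le {B c : ℝ} (hT : 0 < T) (ht : t ∈ Ioo 0 T)
    (hτ : τ t ^ 2 ≤ (t / T) ^ a) (hB : 0 ≤ B) (hE : ψ t ^ 2 + (φ t - ψ t * log (t / T)) ^ 2 ≤ B)
    (hc : |c| ≤ 1 - log (t / T)) :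
    |τ t ^ 2 * φ t * c / t| ≤ √B / 2 * (2 * (t / T) ^ a * (1 - log (t / T)) ^ 2 / t) := by
  have ht0 := ht.1
  have hL : log (t / T) ≤ 0 := log_nonpos (by positivity) ((div_le_one hT).2 ht.2.le)
  have hφ : |φ t| ≤ (1 - log (t / T)) * √B := by
    refine abs_le_of_sq_le_sq ?_ (mul_nonneg (by linarith) (sqrt_nonneg B))
    rw [mul_pow, sq_sqrt hB]
    exact (sq_le_one_sub_sq_mul hL).trans (mul_le_mul_of_nonneg_left hE (sq_nonneg _))
  calc |τ t ^ 2 * φ t * c / t| = τ t ^ 2 * (|φ t| * |c|) / t := by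
        rw [abs_div, abs_mul, abs_mul, abs_of_nonneg (sq_nonneg _), abs_of_pos ht0, mul_assoc]
    _ ≤ (t / T) ^ a * ((1 - log (t / T)) * √B * (1 - log (t / T))) / t := by
        gcongr
        exact mul_nonneg (by linarith) (sqrt_nonneg _)
    _ = √B / 2 * (2 * (t / T) ^ a * (1 - log (t / T)) ^ 2 / t) := by ring

theorem exists_tendsto_lowFrequency (ha : 0 < a) (hT : 0 < T)
    (hτ : ∀ t ∈ Ioc 0 T, τ t ^ 2 ≤ (t / T) ^ a)
    (hφ : ∀ t ∈ Ioc 0 T, HasDerivAt φ (ψ t / t) t)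
    (hψ : ∀ t ∈ Ioc 0 T, HasDerivAt ψ (-(τ t ^ 2) * φ t / t) t) :
    ∃ ψ₀ φ₀ : ℝ, Tendsto ψ (𝓝[>] 0) (𝓝 ψ₀) ∧
      Tendsto (fun t => φ t - ψ t * log (t / T)) (𝓝[>] 0) (𝓝 φ₀) ∧
      ψ₀ ^ 2 + φ₀ ^ 2 ≤ exp (lowWeight a T T) * (ψ T ^ 2 + φ T ^ 2) := by
  set B := exp (lowWeight a T T) * (ψ T ^ 2 + φ T ^ 2)
  have hE := fun t (ht : t ∈ Ioc 0 T) => lowEnergy_le_exp_mul ha hT hτ hφ hψ ht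
  have hderiv := fun t (ht : t ∈ Ioo 0 T) c => abs_deriv_le_of_lowEnergy_le (c := c) hT ht
    (hτ t (Ioo_subset_Ioc_self ht)) (by positivity) (hE t (Ioo_subset_Ioc_self ht))
  have hL : ∀ t ∈ Ioo 0 T, log (t / T) ≤ 0 := fun t ht =>
    log_nonpos (div_nonneg ht.1.le hT.le) ((div_le_one hT).2 ht.2.le)
  have hG : ∀ t ∈ Ioc 0 T, HasDerivAt (fun t => √B / 2 * lowWeight a T t)
      (√B / 2 * (2 * (t / T) ^ a * (1 - log (t / T)) ^ 2 / t)) t :=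
    fun t ht => (hasDerivAt_lowWeight ha.ne' hT ht.1).const_mul _
  have hGb : BddBelow ((fun t => √B / 2 * lowWeight a T t) '' Ioc 0 T) :=
    ⟨0, by rintro _ ⟨t, ht, rfl⟩; exact mul_nonneg (by positivity) (lowWeight_nonneg ha hT ht.1)⟩
  obtain ⟨ψ₀, hψ₀⟩ := exists_tendsto_nhdsGT_of_abs_deriv_le hT hψ hG
    (fun t ht => by simpa [neg_mul, neg_div] using hderiv t ht (-1) (by simp; linarith [hL t ht]))
    hGb
  obtain ⟨φ₀, hφ₀⟩ := exists_tendsto_nhdsGT_of_abs_deriv_le hT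
    (fun t ht => hasDerivAt_renormalized hT ht.1 (hφ t ht) (hψ t ht)) hG
    (fun t ht => hderiv t ht _ (by rw [abs_of_nonpos (hL t ht)]; linarith)) hGb
  refine ⟨ψ₀, φ₀, hψ₀, hφ₀, le_of_tendsto ((hψ₀.pow 2).add (hφ₀.pow 2)) ?_⟩
  filter_upwards [Ioc_mem_nhdsGT hT] with t ht using hE t ht

end LowEnergy

end WaveMode

namespace Kasner

open WaveMode

variable {D : ℕ} {p : Fin D → ℝ} {lam : Fin D → ℤ} {t : ℝ}

noncomputable def tauMoment (p : Fin D → ℝ) (lam : Fin D → ℤ) (k : ℕ) (t : ℝ) : ℝ :=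
  ∑ i, (2 - 2 * p i) ^ k * t ^ (2 - 2 * p i) * (lam i : ℝ) ^ 2

noncomputable def zeta (p : Fin D → ℝ) (lam : Fin D → ℤ) (t : ℝ) : ℝ :=
  2 * tauMoment p lam 0 t / tauMoment p lam 1 t

lemma tauMoment_zero_nonneg (ht : 0 ≤ t) : 0 ≤ tauMoment p lam 0 t :=
  Finset.sum_nonneg fun i _ => by positivity

lemma tau_eq_sqrt (p : Fin D → ℝ) (lam : Fin D → ℤ) :
    tau p lam = fun t => √(tauMoment p lam 0 t) := by
  ext t; simp [tau, tauMoment]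

lemma tau_sq (ht : 0 ≤ t) : tau p lam t ^ 2 = tauMoment p lam 0 t := by
  rw [tau_eq_sqrt, sq_sqrt (tauMoment_zero_nonneg ht)]

lemma tauMoment_pos (hp : ∀ i, p i < 1) (hlam : lam ≠ 0) (ht : 0 < t) (k : ℕ) :
    0 < tauMoment p lam k t := by
  obtain ⟨i, hi⟩ := Function.ne_iff.1 hlam
  have hpos : ∀ j, 0 < 2 - 2 * p j := fun j => by linarith [hp j]
  refine Finset.sum_pos' (fun j _ => by have := hpos j; positivity) ⟨i, Finset.mem_univ i, ?_⟩
  have : (lam i : ℝ) ≠ 0 := Int.cast_ne_zero.2 hi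
  have := hpos i
  positivity

lemma hasDerivAt_tauMoment (ht : 0 < t) (k : ℕ) :
    HasDerivAt (tauMoment p lam k) (tauMoment p lam (k + 1) t / t) t := by
  unfold tauMoment
  rw [Finset.sum_div]
  refine HasDerivAt.fun_sum fun i _ => ?_
  refine (((hasDerivAt_rpow_const (Or.inl ht.ne')).const_mul _).mul_const _).congr_deriv ?_
  rw [rpow_sub_one ht.ne']
  ring

lemma tauMoment_one_sq_le (ht : 0 ≤ t) :
    tauMoment p lam 1 t ^ 2 ≤ tauMoment p lam 0 t * tauMoment p lam 2 t :=
  Finset.sum_sq_le_sum_mul_sum_of_sq_le_mul _ (fun i _ => by positivity) (fun i _ => by positivity)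
    fun i _ => le_of_eq (by ring)

lemma mul_tauMoment_zero_le {a : ℝ} (ha : ∀ i, a ≤ 2 - 2 * p i) (ht : 0 ≤ t) :
    a * tauMoment p lam 0 t ≤ tauMoment p lam 1 t := by
  simp only [tauMoment, Finset.mul_sum, pow_zero, pow_one, one_mul, ← mul_assoc]
  exact Finset.sum_le_sum fun i _ => by gcongr; exact ha i

lemma tauMoment_one_le {b : ℝ} (hb : ∀ i, 2 - 2 * p i ≤ b) (ht : 0 ≤ t) :
    tauMoment p lam 1 t ≤ b * tauMoment p lam 0 t := by
  simp only [tauMoment, Finset.mul_sum, pow_zero, pow_one, one_mul, ← mul_assoc]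
  exact Finset.sum_le_sum fun i _ => by gcongr; exact hb i

lemma zeta_mem_Icc {a b : ℝ} (ha : 0 < a) (hab : ∀ i, a ≤ 2 - 2 * p i ∧ 2 - 2 * p i ≤ b)
    (hlam : lam ≠ 0) (ht : 0 < t) : zeta p lam t ∈ Icc (2 / b) (2 / a) := by
  have hp : ∀ i, p i < 1 := fun i => by linarith [(hab i).1]
  have h0 := tauMoment_pos hp hlam ht 0
  have h1 := tauMoment_pos hp hlam ht 1
  have hlo := mul_tauMoment_zero_le (lam := lam) (fun i => (hab i).1) ht.le
  have hhi := tauMoment_one_le (lam := lam) (fun i => (hab i).2) ht.le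
  have hb : 0 < b := pos_of_mul_pos_left (h1.trans_le hhi) h0.le
  constructor
  · rw [zeta, div_le_div_iff₀ hb h1]; nlinarith
  · rw [zeta, div_le_div_iff₀ h1 ha]; nlinarith

lemma hasDerivAt_tau (hp : ∀ i, p i < 1) (hlam : lam ≠ 0) (ht : 0 < t) :
    HasDerivAt (tau p lam) (tau p lam t / (t * zeta p lam t)) t := by
  have h0 := tauMoment_pos hp hlam ht 0
  have h1 := tauMoment_pos hp hlam ht 1
  rw [tau_eq_sqrt]
  refine ((hasDerivAt_tauMoment ht 0).sqrt h0.ne').congr_deriv ?_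
  rw [zeta]
  field_simp
  exact (sq_sqrt h0.le).symm

lemma hasDerivAt_zeta (hp : ∀ i, p i < 1) (hlam : lam ≠ 0) (ht : 0 < t) :
    HasDerivAt (zeta p lam)
      (2 * (tauMoment p lam 1 t ^ 2 - tauMoment p lam 0 t * tauMoment p lam 2 t) /
        (t * tauMoment p lam 1 t ^ 2)) t :=
  (((hasDerivAt_tauMoment ht 0).const_mul 2).div (hasDerivAt_tauMoment ht 1)
    (tauMoment_pos hp hlam ht 1).ne').congr_deriv (by field_simp)

lemma monotoneOn_tau (hp : ∀ i, p i ≤ 1) : MonotoneOn (tau p lam) (Ici 0) := by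
  intro s hs t ht hst
  simp only [tau_eq_sqrt, tauMoment]
  gcongr with i
  linarith [hp i]

lemma tau_sq_le_rpow {a T : ℝ} (ha : ∀ i, a ≤ 2 - 2 * p i) (hT : tau p lam T = 1) (ht : 0 < t)
    (htT : t ≤ T) : tau p lam t ^ 2 ≤ (t / T) ^ a := by
  have hT0 : 0 < T := ht.trans_le htT
  have hu : t / T ≤ 1 := (div_le_one hT0).2 htT
  calc tau p lam t ^ 2 = tauMoment p lam 0 t := tau_sq ht.le
    _ ≤ (t / T) ^ a * tauMoment p lam 0 T := by
        simp only [tauMoment, Finset.mul_sum, pow_zero, one_mul]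
        refine Finset.sum_le_sum fun i _ => ?_
        rw [show t = t / T * T by field_simp, mul_rpow (by positivity) hT0.le,
          div_mul_cancel₀ t hT0.ne', mul_assoc]
        exact mul_le_mul_of_nonneg_right (rpow_le_rpow_of_exponent_ge (by positivity) hu (ha i))
          (by positivity)
    _ = (t / T) ^ a := by rw [← tau_sq hT0.le, hT, one_pow, mul_one]

lemma jap_mul_le (hlam : lam ≠ 0) (u v : ℝ) :
    jap lam * (u ^ 2 / tau p lam 1 + tau p lam 1 * v ^ 2) ≤ 2 * (jap lam ^ 2 * v ^ 2 + u ^ 2) := by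
  set S := ∑ i, (lam i : ℝ) ^ 2
  have hS : 1 ≤ S := by
    obtain ⟨i, hi⟩ := Function.ne_iff.1 hlam
    have : (1 : ℝ) ≤ (lam i : ℝ) ^ 2 := by
      exact_mod_cast (one_le_sq_iff_one_le_abs _).2 (Int.one_le_abs hi)
    exact this.trans (Finset.single_le_sum (fun j _ => sq_nonneg (lam j : ℝ)) (Finset.mem_univ i))
  have hN : tau p lam 1 = √S := by simp [tau, S]
  have hJ : jap lam = √(1 + S) := rfl
  rw [hN, hJ]
  have hN1 : 1 ≤ √S := one_le_sqrt.2 hS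
  have hNJ : √S ≤ √(1 + S) := sqrt_le_sqrt (by linarith)
  have hJN : √(1 + S) ≤ 2 * √S := abs_le_of_sq_le_sq' (by
    rw [mul_pow, sq_sqrt (by linarith), sq_sqrt (by linarith)]; linarith) (by positivity) |>.2
  have h1 : √(1 + S) * (u ^ 2 / √S) ≤ 2 * u ^ 2 := by
    rw [mul_div_assoc', div_le_iff₀ (by positivity)]
    nlinarith [mul_le_mul_of_nonneg_right hJN (sq_nonneg u)]
  have h2 : √(1 + S) * (√S * v ^ 2) ≤ √(1 + S) ^ 2 * v ^ 2 := by
    nlinarith [mul_le_mul_of_nonneg_left hNJ (mul_nonneg (sqrt_nonneg (1 + S)) (sq_nonneg v))]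
  nlinarith [mul_nonneg (sq_nonneg (√(1 + S))) (sq_nonneg v)]

lemma jap_rpow_mul_le {C P u v : ℝ} (hlam : lam ≠ 0) (hC : 0 ≤ C) (s : ℝ)
    (hP : P ≤ C * (u ^ 2 / tau p lam 1 + tau p lam 1 * v ^ 2)) :
    jap lam ^ (2 * s + 1) * P ≤
      2 * C * (jap lam ^ (2 * s + 2) * v ^ 2 + jap lam ^ (2 * s) * u ^ 2) := by
  have hJ : 0 < jap lam := by unfold jap; positivity
  calc jap lam ^ (2 * s + 1) * P = jap lam ^ (2 * s) * (jap lam * P) := by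
        rw [rpow_add hJ, rpow_one, mul_assoc]
    _ ≤ jap lam ^ (2 * s) * (C * (2 * (jap lam ^ 2 * v ^ 2 + u ^ 2))) := by
        gcongr jap lam ^ (2 * s) * ?_
        calc jap lam * P ≤ C * (jap lam * (u ^ 2 / tau p lam 1 + tau p lam 1 * v ^ 2)) := by
              rw [mul_left_comm]; gcongr
          _ ≤ C * (2 * (jap lam ^ 2 * v ^ 2 + u ^ 2)) :=
              mul_le_mul_of_nonneg_left (jap_mul_le hlam u v) hC
    _ = 2 * C * (jap lam ^ (2 * s + 2) * v ^ 2 + jap lam ^ (2 * s) * u ^ 2) := by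
        rw [rpow_add hJ, rpow_two]; ring

lemma exists_exponent_bounds (hp : ∀ i, p i < 1) :
    ∃ a b : ℝ, 0 < a ∧ a ≤ b ∧ ∀ i, a ≤ 2 - 2 * p i ∧ 2 - 2 * p i ≤ b := by
  have small : ∀ᶠ a in 𝓝[>] (0 : ℝ), ∀ i, a ≤ 2 - 2 * p i :=
    eventually_all.2 fun i => nhdsWithin_le_nhds (eventually_le_nhds (by linarith [hp i]))
  obtain ⟨a, hai, ha⟩ := (small.and self_mem_nhdsWithin).exists
  obtain ⟨b, hb⟩ := Finite.bddAbove_range fun i => 2 - 2 * p i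
  exact ⟨a, max a b, ha, le_max_left a b,
    fun i => ⟨hai i, (hb ⟨i, rfl⟩).trans (le_max_right a b)⟩⟩

theorem exists_mode_scattering_bound (hp : ∀ i, p i < 1) :
    ∃ C : ℝ, 0 < C ∧ ∀ lam : Fin D → ℤ, lam ≠ 0 → ∀ T, 0 < T → T ≤ 1 → tau p lam T = 1 →
      ∀ φ ψ : ℝ → ℝ, IsWaveSol p lam φ ψ (Ioi 0) →
      ∃ ψ₀ φ₀ : ℝ, Tendsto ψ (𝓝[>] 0) (𝓝 ψ₀) ∧
        Tendsto (fun t => φ t - ψ t * log (t / T)) (𝓝[>] 0) (𝓝 φ₀) ∧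
        ψ₀ ^ 2 + φ₀ ^ 2 ≤ C * (ψ 1 ^ 2 / tau p lam 1 + tau p lam 1 * φ 1 ^ 2) := by
  obtain ⟨a, b, ha, hab, he⟩ := exists_exponent_bounds hp
  have hb : 0 < b := ha.trans_le hab
  set m := 2 / b
  set M := 2 / a
  refine ⟨exp (2 / a * (1 + 1 / a) ^ 2 + 2 / a ^ 3) * (2 / m ^ 2 *
    exp (2 * (2 * M + 1) / m ^ 2 * (M - m) + 1 / (2 * m ^ 2)) * (M ^ 2 + M + 1)),
    by positivity, fun lam hlam T hT0 hT1 hτT φ ψ hsol => ?_⟩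
  obtain ⟨ψ₀, φ₀, hψ₀, hφ₀, low⟩ := exists_tendsto_lowFrequency ha hT0
    (fun t ht => tau_sq_le_rpow (fun i => (he i).1) hτT ht.1 ht.2)
    (fun t ht => (hsol t ht.1).1) (fun t ht => (hsol t ht.1).2)
  have pos : ∀ t ∈ Icc T 1, 0 < t := fun t ht => hT0.trans_le ht.1
  have high := highFrequency_sq_add_sq_le (by positivity : 0 < m) hT0 hT1
    (fun t ht => hasDerivAt_tau hp hlam (pos t ht))
    (fun t ht => hτT ▸ monotoneOn_tau (fun i => (hp i).le) hT0.le (hT0.le.trans ht.1) ht.1) hτT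
    (fun t ht => hasDerivAt_zeta hp hlam (pos t ht))
    (fun t ht => div_nonpos_of_nonpos_of_nonneg
      (by linarith [tauMoment_one_sq_le (p := p) (lam := lam) (pos t ht).le])
      (mul_nonneg (pos t ht).le (sq_nonneg _)))
    (fun t ht => (zeta_mem_Icc ha he hlam (pos t ht)).1)
    (fun t ht => (zeta_mem_Icc ha he hlam (pos t ht)).2)
    (fun t ht => (hsol t (pos t ht)).1) (fun t ht => (hsol t (pos t ht)).2)
  refine ⟨ψ₀, φ₀, hψ₀, hφ₀, low.trans ?_⟩
  rw [lowWeight_self hT0.ne', mul_assoc]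
  gcongr

end Kasner

open Kasner

theorem wave_forward_scattering_bound_general (D : ℕ) (p : Fin D → ℝ)
    (hp : ∀ i, p i < 1) :
    ∃ C : ℝ, 0 < C ∧
      ∀ (s : ℝ) (tstar : (Fin D → ℤ) → ℝ),
      (∀ lam : Fin D → ℤ, lam ≠ 0 →
        0 < tstar lam ∧ tstar lam ≤ 1 ∧ tau p lam (tstar lam) = 1) →
      ∀ (φ ψ : (Fin D → ℤ) → ℝ → ℝ),
      (∀ lam : Fin D → ℤ, lam ≠ 0 → IsWaveSol p lam (φ lam) (ψ lam) (Set.Ioi 0)) →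
      Summable (fun l : {l : Fin D → ℤ // l ≠ 0} =>
        jap l.1 ^ (2 * s + 2) * (φ l.1 1) ^ 2 + jap l.1 ^ (2 * s) * (ψ l.1 1) ^ 2) →
      ∃ psiInf phiInf : (Fin D → ℤ) → ℝ,
        (∀ lam : Fin D → ℤ, lam ≠ 0 →
          Tendsto (ψ lam) (𝓝[>] (0:ℝ)) (𝓝 (psiInf lam)) ∧
          Tendsto (fun t => φ lam t - ψ lam t * Real.log (t / tstar lam))
            (𝓝[>] (0:ℝ)) (𝓝 (phiInf lam))) ∧
        Summable (fun l : {l : Fin D → ℤ // l ≠ 0} =>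
          jap l.1 ^ (2 * s + 1) * ((psiInf l.1) ^ 2 + (phiInf l.1) ^ 2)) ∧
        (∑' l : {l : Fin D → ℤ // l ≠ 0},
            jap l.1 ^ (2 * s + 1) * ((psiInf l.1) ^ 2 + (phiInf l.1) ^ 2)) ≤
          C * ∑' l : {l : Fin D → ℤ // l ≠ 0},
            (jap l.1 ^ (2 * s + 2) * (φ l.1 1) ^ 2 + jap l.1 ^ (2 * s) * (ψ l.1 1) ^ 2) := by
  obtain ⟨C, hC, hmode⟩ := exists_mode_scattering_bound hp
  refine ⟨2 * C, by positivity, fun s tstar htstar φ ψ hsol hsum => ?_⟩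
  choose! ψ₀ φ₀ hlim using fun lam (hlam : lam ≠ 0) =>
    hmode lam hlam _ (htstar lam hlam).1 (htstar lam hlam).2.1 (htstar lam hlam).2.2 _ _
      (hsol lam hlam)
  obtain ⟨hsummable, hle⟩ := summable_and_tsum_le_mul
    (fun l : {l : Fin D → ℤ // l ≠ 0} => by unfold jap; positivity)
    (fun l => jap_rpow_mul_le l.2 hC.le s (hlim l.1 l.2).2.2) hsum
  exact ⟨ψ₀, φ₀, fun lam hlam => ⟨(hlim lam hlam).1, (hlim lam hlam).2.1⟩, hsummable, hle⟩

/-- Forward scattering bound with half-derivative gain: if the Cauchy data at t = 1 lies in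
H^{s+1} × H^s, then the asymptotic data (ψ_∞, φ̃_∞) lies in H^{s+1/2} × H^{s+1/2} (modified),
with a bound uniform in s. -/
theorem wave_forward_scattering_bound (D : ℕ) (hD : 2 ≤ D) (p : Fin D → ℝ)
    (hp : ∀ i, p i < 1) :
    ∃ C : ℝ, 0 < C ∧
      ∀ (s : ℝ) (tstar : (Fin D → ℤ) → ℝ),
      (∀ lam : Fin D → ℤ, lam ≠ 0 →
        0 < tstar lam ∧ tstar lam ≤ 1 ∧ tau p lam (tstar lam) = 1) →
      ∀ (φ ψ : (Fin D → ℤ) → ℝ → ℝ),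
      (∀ lam : Fin D → ℤ, lam ≠ 0 → IsWaveSol p lam (φ lam) (ψ lam) (Set.Ioi 0)) →
      Summable (fun l : {l : Fin D → ℤ // l ≠ 0} =>
        jap l.1 ^ (2 * s + 2) * (φ l.1 1) ^ 2 + jap l.1 ^ (2 * s) * (ψ l.1 1) ^ 2) →
      ∃ psiInf phiInf : (Fin D → ℤ) → ℝ,
        (∀ lam : Fin D → ℤ, lam ≠ 0 →
          Tendsto (ψ lam) (𝓝[>] (0:ℝ)) (𝓝 (psiInf lam)) ∧
          Tendsto (fun t => φ lam t - ψ lam t * Real.log (t / tstar lam))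
            (𝓝[>] (0:ℝ)) (𝓝 (phiInf lam))) ∧
        Summable (fun l : {l : Fin D → ℤ // l ≠ 0} =>
          jap l.1 ^ (2 * s + 1) * ((psiInf l.1) ^ 2 + (phiInf l.1) ^ 2)) ∧
        (∑' l : {l : Fin D → ℤ // l ≠ 0},
            jap l.1 ^ (2 * s + 1) * ((psiInf l.1) ^ 2 + (phiInf l.1) ^ 2)) ≤
          C * ∑' l : {l : Fin D → ℤ // l ≠ 0},
            (jap l.1 ^ (2 * s + 2) * (φ l.1 1) ^ 2 + jap l.1 ^ (2 * s) * (ψ l.1 1) ^ 2) :=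
  wave_forward_scattering_bound_general D p hp
end
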